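/- arXiv:1005.2056 — 4 statements merged into one kernel-verified Lean document; each statement's English description precedes it below -/
import Mathlib

section
/- Let α ≥ 1 be an integer and let f(x) = x^α on ℂ. For any smooth compactly supported (0,0)-test function φ on ℂ, the limit lim_{ε→0⁺} ∫_{|f(x)|²>ε} φ(x)/f(x) dV(x) exists. -/
open MeasureTheory Filter Set Real

namespace HLpv


lemma exp_add_exp_neg (θ : ℝ) :
    Complex.exp (θ * Complex.I) + Complex.exp (-(θ * Complex.I)) = 2 * (Real.cos θ : ℂ) := by
  rw [show -((θ:ℂ) * Complex.I) = ((-θ : ℝ) : ℂ) * Complex.I by push_cast; ring,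
    Complex.exp_mul_I, Complex.exp_mul_I, ← Complex.ofReal_cos, ← Complex.ofReal_sin,
    ← Complex.ofReal_cos, ← Complex.ofReal_sin, Real.cos_neg, Real.sin_neg]
  push_cast
  ring

lemma exp_sub_exp_neg (θ : ℝ) :
    Complex.exp (θ * Complex.I) - Complex.exp (-(θ * Complex.I)) =
      2 * Complex.I * (Real.sin θ : ℂ) := by
  rw [show -((θ:ℂ) * Complex.I) = ((-θ : ℝ) : ℂ) * Complex.I by push_cast; ring,
    Complex.exp_mul_I, Complex.exp_mul_I, ← Complex.ofReal_cos, ← Complex.ofReal_sin,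
    ← Complex.ofReal_cos, ← Complex.ofReal_sin, Real.cos_neg, Real.sin_neg]
  push_cast
  ring

lemma cos_mul_exp (θ : ℝ) (n : ℤ) :
    (Real.cos θ : ℂ) * Complex.exp (n * θ * Complex.I) =
      (Complex.exp ((n+1) * θ * Complex.I) + Complex.exp ((n-1) * θ * Complex.I)) / 2 := by
  have e1 : Complex.exp (((n:ℂ)+1) * θ * Complex.I)
      = Complex.exp ((θ:ℂ) * Complex.I) * Complex.exp ((n:ℂ) * θ * Complex.I) := by
    rw [← Complex.exp_add]; ring_nf
  have e2 : Complex.exp (((n:ℂ)-1) * θ * Complex.I)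
      = Complex.exp (-((θ:ℂ) * Complex.I)) * Complex.exp ((n:ℂ) * θ * Complex.I) := by
    rw [← Complex.exp_add]; ring_nf
  rw [e1, e2]
  linear_combination (-(Complex.exp ((n:ℂ) * θ * Complex.I)) / 2) * exp_add_exp_neg θ

lemma sin_mul_exp (θ : ℝ) (n : ℤ) :
    (Real.sin θ : ℂ) * Complex.exp (n * θ * Complex.I) =
      (Complex.exp ((n+1) * θ * Complex.I) - Complex.exp ((n-1) * θ * Complex.I))
        / (2 * Complex.I) := by
  have e1 : Complex.exp (((n:ℂ)+1) * θ * Complex.I)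
      = Complex.exp ((θ:ℂ) * Complex.I) * Complex.exp ((n:ℂ) * θ * Complex.I) := by
    rw [← Complex.exp_add]; ring_nf
  have e2 : Complex.exp (((n:ℂ)-1) * θ * Complex.I)
      = Complex.exp (-((θ:ℂ) * Complex.I)) * Complex.exp ((n:ℂ) * θ * Complex.I) := by
    rw [← Complex.exp_add]; ring_nf
  rw [e1, e2, eq_div_iff (by simp [Complex.I_ne_zero] : (2:ℂ) * Complex.I ≠ 0)]
  linear_combination (-(Complex.exp ((n:ℂ) * θ * Complex.I))) * exp_sub_exp_neg θ

lemma ang_cont (a b : ℕ) (n : ℤ) :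
    Continuous (fun θ : ℝ => ((Real.cos θ ^ a * Real.sin θ ^ b : ℝ) : ℂ) *
      Complex.exp (n * θ * Complex.I)) := by
  fun_prop

lemma ang_base (n : ℤ) (hn : n ≠ 0) :
    (∫ θ in (-π)..π, Complex.exp (n * θ * Complex.I)) = 0 := by
  have hn0 : (n : ℂ) * Complex.I ≠ 0 :=
    mul_ne_zero (Int.cast_ne_zero.mpr hn) Complex.I_ne_zero
  have : ∀ θ : ℝ, Complex.exp ((n:ℂ) * θ * Complex.I)
      = Complex.exp (((n:ℂ) * Complex.I) * θ) := by
    intro θ; ring_nf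
  rw [intervalIntegral.integral_congr (g := fun θ : ℝ => Complex.exp (((n:ℂ) * Complex.I) * θ))
    (fun θ _ => this θ)]
  rw [integral_exp_mul_complex hn0]
  have h1 : Complex.exp ((n : ℂ) * Complex.I * (π : ℝ)) = (-1 : ℂ) ^ n := by
    rw [show (n : ℂ) * Complex.I * (π : ℝ) = n * ((π : ℝ) * Complex.I) by ring,
      Complex.exp_int_mul, Complex.exp_pi_mul_I]
  have h2 : Complex.exp ((n : ℂ) * Complex.I * ((-π : ℝ) : ℝ)) = (-1 : ℂ) ^ n := by
    push_cast
    rw [show (n : ℂ) * Complex.I * (-(π:ℝ)) = -((n:ℂ) * ((π:ℝ) * Complex.I)) by ring,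
      Complex.exp_neg, Complex.exp_int_mul, Complex.exp_pi_mul_I, ← inv_zpow, inv_neg, inv_one]
  rw [h1, h2]
  simp

lemma ang_aux : ∀ (m a b : ℕ) (n : ℤ), a + b ≤ m → a + b < n.natAbs →
    (∫ θ in (-π)..π, ((Real.cos θ ^ a * Real.sin θ ^ b : ℝ) : ℂ) *
      Complex.exp (n * θ * Complex.I)) = 0 := by
  intro m
  induction m with
  | zero =>
    intro a b n hm hn
    obtain ⟨rfl, rfl⟩ : a = 0 ∧ b = 0 := by omega
    have : ∀ θ : ℝ, ((Real.cos θ ^ 0 * Real.sin θ ^ 0 : ℝ) : ℂ) *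
        Complex.exp ((n:ℂ) * θ * Complex.I) = Complex.exp ((n:ℂ) * θ * Complex.I) := by
      intro θ; norm_num
    rw [intervalIntegral.integral_congr (g := fun θ : ℝ => Complex.exp ((n:ℂ) * θ * Complex.I))
      (fun θ _ => this θ)]
    exact ang_base n (by omega)
  | succ m ih =>
    intro a b n hm hn
    match a, b with
    | 0, 0 =>
      have : ∀ θ : ℝ, ((Real.cos θ ^ 0 * Real.sin θ ^ 0 : ℝ) : ℂ) *
          Complex.exp ((n:ℂ) * θ * Complex.I) = Complex.exp ((n:ℂ) * θ * Complex.I) := by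
        intro θ; norm_num
      rw [intervalIntegral.integral_congr (g := fun θ : ℝ => Complex.exp ((n:ℂ) * θ * Complex.I))
        (fun θ _ => this θ)]
      exact ang_base n (by omega)
    | a + 1, b =>
      have key : ∀ θ : ℝ, ((Real.cos θ ^ (a+1) * Real.sin θ ^ b : ℝ) : ℂ) *
          Complex.exp (n * θ * Complex.I) =
          (((Real.cos θ ^ a * Real.sin θ ^ b : ℝ) : ℂ) * Complex.exp (((n+1 : ℤ) : ℂ) * θ * Complex.I) +
           ((Real.cos θ ^ a * Real.sin θ ^ b : ℝ) : ℂ) * Complex.exp (((n-1 : ℤ) : ℂ) * θ * Complex.I)) / 2 := by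
        intro θ
        rw [show ((n+1 : ℤ) : ℂ) = (n:ℂ)+1 by push_cast; ring,
          show ((n-1 : ℤ) : ℂ) = (n:ℂ)-1 by push_cast; ring,
          Complex.ofReal_mul, Complex.ofReal_mul, Complex.ofReal_pow, Complex.ofReal_pow,
          Complex.ofReal_pow, pow_succ]
        have h := cos_mul_exp θ n
        calc (Real.cos θ : ℂ) ^ a * (Real.cos θ : ℂ) * ((Real.sin θ : ℝ) : ℂ) ^ b *
              Complex.exp ((n:ℂ) * θ * Complex.I)
            = (Real.cos θ : ℂ) ^ a * ((Real.sin θ : ℝ) : ℂ) ^ b *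
              ((Real.cos θ : ℂ) * Complex.exp ((n:ℂ) * θ * Complex.I)) := by ring
          _ = _ := by rw [h]; ring
      rw [intervalIntegral.integral_congr (fun θ _ => key θ)]
      rw [intervalIntegral.integral_div]
      rw [intervalIntegral.integral_add ((ang_cont a b (n+1)).intervalIntegrable _ _)
        ((ang_cont a b (n-1)).intervalIntegrable _ _)]
      rw [ih a b (n+1) (by omega) (by omega), ih a b (n-1) (by omega) (by omega)]
      simp
    | 0, b + 1 =>
      have key : ∀ θ : ℝ, ((Real.cos θ ^ 0 * Real.sin θ ^ (b+1) : ℝ) : ℂ) *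
          Complex.exp (n * θ * Complex.I) =
          (((Real.cos θ ^ 0 * Real.sin θ ^ b : ℝ) : ℂ) * Complex.exp (((n+1 : ℤ) : ℂ) * θ * Complex.I) -
           ((Real.cos θ ^ 0 * Real.sin θ ^ b : ℝ) : ℂ) * Complex.exp (((n-1 : ℤ) : ℂ) * θ * Complex.I))
            / (2 * Complex.I) := by
        intro θ
        rw [show ((n+1 : ℤ) : ℂ) = (n:ℂ)+1 by push_cast; ring,
          show ((n-1 : ℤ) : ℂ) = (n:ℂ)-1 by push_cast; ring,
          Complex.ofReal_mul, Complex.ofReal_mul, Complex.ofReal_pow, Complex.ofReal_pow,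
          Complex.ofReal_pow, pow_succ]
        have h := sin_mul_exp θ n
        calc (Real.cos θ : ℂ) ^ 0 * (((Real.sin θ : ℝ) : ℂ) ^ b * ((Real.sin θ : ℝ) : ℂ)) *
              Complex.exp ((n:ℂ) * θ * Complex.I)
            = (Real.cos θ : ℂ) ^ 0 * ((Real.sin θ : ℝ) : ℂ) ^ b *
              ((Real.sin θ : ℂ) * Complex.exp ((n:ℂ) * θ * Complex.I)) := by ring
          _ = _ := by rw [h]; ring
      rw [intervalIntegral.integral_congr (fun θ _ => key θ)]
      rw [intervalIntegral.integral_div]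
      rw [intervalIntegral.integral_sub ((ang_cont 0 b (n+1)).intervalIntegrable _ _)
        ((ang_cont 0 b (n-1)).intervalIntegrable _ _)]
      rw [ih 0 b (n+1) (by omega) (by omega), ih 0 b (n-1) (by omega) (by omega)]
      simp

lemma ang (a b : ℕ) (n : ℤ) (h : a + b < n.natAbs) :
    (∫ θ in (-π)..π, ((Real.cos θ ^ a * Real.sin θ ^ b : ℝ) : ℂ) *
      Complex.exp (n * θ * Complex.I)) = 0 :=
  ang_aux (a + b) a b n le_rfl h


lemma expand_exp (k : ℕ) (M : ContinuousMultilinearMap ℝ (fun _ : Fin k => ℂ) ℂ) (θ : ℝ) :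
    M (fun _ => Complex.exp (θ * Complex.I)) =
      ∑ s : Finset (Fin k),
        ((Real.cos θ ^ (k - s.card) * Real.sin θ ^ s.card : ℝ)) •
          M (s.piecewise (fun _ => Complex.I) (fun _ => 1)) := by
  have hx : (fun _ : Fin k => Complex.exp (θ * Complex.I)) =
      ((fun _ : Fin k => Real.sin θ • Complex.I) + (fun _ => Real.cos θ • (1:ℂ))) := by
    funext i
    simp only [Pi.add_apply, Complex.real_smul, Complex.exp_mul_I, ← Complex.ofReal_cos,
      ← Complex.ofReal_sin, mul_one]
    ring
  rw [hx, M.map_add_univ]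
  refine Finset.sum_congr rfl fun s _ => ?_
  have hp : (s.piecewise (fun _ : Fin k => Real.sin θ • Complex.I)
      (fun _ => Real.cos θ • (1:ℂ))) = fun i =>
        (if i ∈ s then Real.sin θ else Real.cos θ) •
          (s.piecewise (fun _ : Fin k => Complex.I) (fun _ => 1) i) := by
    funext i
    by_cases hi : i ∈ s <;> simp [Finset.piecewise, hi]
  rw [hp, M.map_smul_univ]
  congr 1
  rw [← Finset.prod_mul_prod_compl s]
  rw [Finset.prod_congr rfl (fun i hi => if_pos hi),
    Finset.prod_congr rfl (fun i (hi : i ∈ sᶜ) => if_neg (Finset.mem_compl.mp hi)),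
    Finset.prod_const, Finset.prod_const, Finset.card_compl, Fintype.card_fin]
  ring

lemma ang_multilinear (α k : ℕ) (hk : k < α)
    (M : ContinuousMultilinearMap ℝ (fun _ : Fin k => ℂ) ℂ) :
    (∫ θ in Ioo (-π) π,
      M (fun _ => Complex.exp (θ * Complex.I)) / (Complex.exp (θ * Complex.I)) ^ α) = 0 := by
  have hconv : (∫ θ in Ioo (-π) π,
      M (fun _ => Complex.exp (θ * Complex.I)) / (Complex.exp (θ * Complex.I)) ^ α)
      = ∫ θ in (-π)..π,
        M (fun _ => Complex.exp (θ * Complex.I)) / (Complex.exp (θ * Complex.I)) ^ α := by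
    rw [intervalIntegral.integral_of_le (by linarith [Real.pi_pos] : -π ≤ π),
      MeasureTheory.integral_Ioc_eq_integral_Ioo]
  rw [hconv]
  have key : ∀ θ : ℝ,
      M (fun _ => Complex.exp (θ * Complex.I)) / (Complex.exp (θ * Complex.I)) ^ α
      = ∑ s : Finset (Fin k),
          (((Real.cos θ ^ (k - s.card) * Real.sin θ ^ s.card : ℝ) : ℂ) *
            Complex.exp (((-(α:ℤ) : ℤ) : ℂ) * θ * Complex.I)) *
            M (s.piecewise (fun _ => Complex.I) (fun _ => 1)) := by
    intro θ
    rw [expand_exp, Finset.sum_div]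
    refine Finset.sum_congr rfl fun s _ => ?_
    rw [Complex.real_smul]
    have hE : (Complex.exp ((θ:ℂ) * Complex.I)) ^ α = Complex.exp ((α : ℂ) * (θ * Complex.I)) := by
      rw [← Complex.exp_nat_mul]
    have hinv : Complex.exp (((-(α:ℤ) : ℤ) : ℂ) * θ * Complex.I)
        = (Complex.exp ((α : ℂ) * (θ * Complex.I)))⁻¹ := by
      rw [← Complex.exp_neg]
      congr 1
      push_cast
      ring
    rw [hE, hinv, div_eq_mul_inv]
    ring
  rw [intervalIntegral.integral_congr (fun θ _ => key θ)]
  rw [intervalIntegral.integral_finset_sum]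
  · refine Finset.sum_eq_zero fun s _ => ?_
    rw [intervalIntegral.integral_mul_const,
      ang (k - s.card) s.card (-(α:ℤ)) (by
        have := Finset.card_le_univ s
        simp only [Finset.card_univ, Fintype.card_fin] at this
        omega), zero_mul]
  · intro s _
    apply Continuous.intervalIntegrable
    fun_prop


lemma annulus_zero (α k : ℕ) (hk : k < α)
    (M : ContinuousMultilinearMap ℝ (fun _ : Fin k => ℂ) ℂ) (ρ : ℝ) (hρ : 0 < ρ) :
    ∫ x in {x : ℂ | ρ < ‖x‖} ∩ Metric.ball 0 1, M (fun _ => x) / x ^ α = 0 := by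
  set f : ℂ → ℂ := fun x => M (fun _ => x) / x ^ α with hf
  set S : Set ℂ := {x : ℂ | ρ < ‖x‖} ∩ Metric.ball (0:ℂ) 1 with hSdef
  have hSm : MeasurableSet S :=
    ((isOpen_lt continuous_const continuous_norm).inter Metric.isOpen_ball).measurableSet
  set u : ℝ → ℂ := fun r => (r:ℂ)^(k+1) / (r:ℂ)^α with hu
  set v : ℝ → ℂ := fun θ =>
    M (fun _ => Complex.exp (θ * Complex.I)) / (Complex.exp (θ * Complex.I)) ^ α with hv
  have htarget : polarCoord.target = Ioi (0:ℝ) ×ˢ Ioo (-π) π := rfl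
  have key : ∀ p ∈ polarCoord.target,
      p.1 • (S.indicator f (Complex.polarCoord.symm p)) =
        ((Ioo ρ 1 ×ˢ Ioo (-π) π) : Set (ℝ × ℝ)).indicator (fun q => u q.1 * v q.2) p := by
    rintro ⟨r, θ⟩ hp
    rw [htarget] at hp
    obtain ⟨hr, hθ⟩ := hp
    simp only [mem_Ioi] at hr
    have hz : Complex.polarCoord.symm (r, θ) = (r : ℂ) * Complex.exp ((θ:ℝ) * Complex.I) := by
      rw [Complex.polarCoord_symm_apply, Complex.exp_mul_I, ← Complex.ofReal_cos,
        ← Complex.ofReal_sin]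
    have hnorm : ‖Complex.polarCoord.symm (r, θ)‖ = r := by
      rw [hz, norm_mul, Complex.norm_exp_ofReal_mul_I, mul_one, Complex.norm_real,
        Real.norm_eq_abs, abs_of_pos hr]
    have hmem : Complex.polarCoord.symm (r, θ) ∈ S ↔ r ∈ Ioo ρ 1 := by
      rw [hSdef, mem_inter_iff, mem_setOf_eq, Metric.mem_ball, dist_zero_right, hnorm, mem_Ioo]
    by_cases hr1 : r ∈ Ioo ρ 1
    · rw [Set.indicator_of_mem (hmem.mpr hr1), Set.indicator_of_mem (by exact ⟨hr1, hθ⟩)]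
      have hE : Complex.exp ((θ:ℝ) * Complex.I) ≠ 0 := Complex.exp_ne_zero _
      have hrc : (r : ℂ) ≠ 0 := by
        simpa using hr.ne'
      have hM : M (fun _ => (r : ℂ) * Complex.exp ((θ:ℝ) * Complex.I)) =
          (r ^ k : ℝ) • M (fun _ => Complex.exp ((θ:ℝ) * Complex.I)) := by
        have : (fun _ : Fin k => (r : ℂ) * Complex.exp ((θ:ℝ) * Complex.I)) =
            fun _ : Fin k => r • Complex.exp ((θ:ℝ) * Complex.I) := by
          funext i; rw [Complex.real_smul]
        rw [this, M.map_smul_univ, Finset.prod_const, Finset.card_univ, Fintype.card_fin]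
      simp only [hf, hu, hv, hz]
      rw [hM, Complex.real_smul, Complex.real_smul, Complex.ofReal_pow, mul_pow]
      have hEα : Complex.exp ((θ:ℝ) * Complex.I) ^ α ≠ 0 := pow_ne_zero _ hE
      have hrα : ((r:ℂ)) ^ α ≠ 0 := pow_ne_zero _ hrc
      field_simp
      ring
    · rw [Set.indicator_of_notMem (fun hc => hr1 (hmem.mp hc)),
        Set.indicator_of_notMem (fun hc => hr1 hc.1), smul_zero]
  calc ∫ x in S, f x = ∫ x, S.indicator f x := (MeasureTheory.integral_indicator hSm).symm
    _ = ∫ p in polarCoord.target, p.1 • (S.indicator f (Complex.polarCoord.symm p)) :=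
        (Complex.integral_comp_polarCoord_symm (S.indicator f)).symm
    _ = ∫ p in polarCoord.target,
          ((Ioo ρ 1 ×ˢ Ioo (-π) π) : Set (ℝ × ℝ)).indicator (fun q => u q.1 * v q.2) p :=
        MeasureTheory.setIntegral_congr_fun polarCoord.open_target.measurableSet key
    _ = ∫ p in polarCoord.target ∩ (Ioo ρ 1 ×ˢ Ioo (-π) π), u p.1 * v p.2 :=
        MeasureTheory.setIntegral_indicator
          ((measurableSet_Ioo.prod measurableSet_Ioo))
    _ = ∫ p in (Ioo ρ 1 ×ˢ Ioo (-π) π : Set (ℝ × ℝ)), u p.1 * v p.2 := by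
        congr 1
        rw [htarget]
        have hsub : (Ioo ρ 1 ×ˢ Ioo (-π) π : Set (ℝ × ℝ)) ⊆ Ioi (0:ℝ) ×ˢ Ioo (-π) π :=
          prod_mono (fun x hx => lt_trans hρ hx.1) subset_rfl
        rw [inter_eq_self_of_subset_right hsub]
    _ = (∫ r in Ioo ρ 1, u r) * ∫ θ in Ioo (-π) π, v θ := by
        rw [Measure.volume_eq_prod, MeasureTheory.setIntegral_prod_mul]
    _ = 0 := by rw [ang_multilinear α k hk M, mul_zero]




lemma idw_eq (f : ℝ → ℂ) (hf : ContDiff ℝ (⊤ : ℕ∞) f) (k : ℕ) {y : ℝ} (hy : y ∈ Icc (0:ℝ) 1) :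
    iteratedDerivWithin k f (Icc 0 1) y = iteratedDeriv k f y := by
  rw [iteratedDerivWithin_eq_iteratedFDerivWithin, iteratedDeriv_eq_iteratedFDeriv]
  congr 1
  have h1 : HasFTaylorSeriesUpToOn (k : ℕ∞) f (ftaylorSeries ℝ f) univ := by
    have := (hf.of_le (by exact_mod_cast le_top) : ContDiff ℝ (k : ℕ∞) f).contDiffOn (s := univ)
    have h := this.ftaylorSeriesWithin uniqueDiffOn_univ
    rwa [ftaylorSeriesWithin_univ] at h
  have h2 : HasFTaylorSeriesUpToOn (k : ℕ∞) f (ftaylorSeries ℝ f) (Icc 0 1) :=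
    h1.mono (subset_univ _)
  have e1 := h2.eq_iteratedFDerivWithin_of_uniqueDiffOn le_rfl
    (uniqueDiffOn_Icc zero_lt_one) hy
  have e2 := h1.eq_iteratedFDerivWithin_of_uniqueDiffOn le_rfl uniqueDiffOn_univ (mem_univ y)
  rw [iteratedFDerivWithin_univ] at e2
  rw [← e1, e2]

lemma taylor_bound (φ : ℂ → ℂ) (hφ : ContDiff ℝ (⊤ : ℕ∞) φ) (m : ℕ) :
    ∃ C : ℝ, ∀ x : ℂ, ‖x‖ ≤ 1 →
      ‖φ x - ∑ k ∈ Finset.range (m+1), ((Nat.factorial k : ℝ)⁻¹) • (iteratedFDeriv ℝ k φ 0 (fun _ => x))‖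
        ≤ C * ‖x‖ ^ (m+1) := by
  obtain ⟨K, hK⟩ := (isCompact_closedBall (0:ℂ) 1).exists_bound_of_continuousOn
    ((hφ.continuous_iteratedFDeriv (m := m+1) (by exact_mod_cast le_top)).continuousOn)
  refine ⟨K / Nat.factorial m, fun x hx => ?_⟩
  set L : ℝ →L[ℝ] ℂ := ContinuousLinearMap.smulRight (1 : ℝ →L[ℝ] ℝ) x with hL
  have hLy : ∀ t : ℝ, L t = t • x := fun t => by
    simp [hL]
  set u : ℝ → ℂ := φ ∘ L with hudef
  have hu : ContDiff ℝ (⊤ : ℕ∞) u := hφ.comp L.contDiff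
  have hiter : ∀ (k : ℕ) (t : ℝ), iteratedDeriv k u t = iteratedFDeriv ℝ k φ (t • x) (fun _ => x) := by
    intro k t
    rw [iteratedDeriv_eq_iteratedFDeriv, hudef,
      ContinuousLinearMap.iteratedFDeriv_comp_right L hφ t ((by exact_mod_cast le_top))]
    simp only [ContinuousMultilinearMap.compContinuousLinearMap_apply, hLy, one_smul]
  have hC : ∀ y ∈ Icc (0:ℝ) 1,
      ‖iteratedDerivWithin (m+1) u (Icc 0 1) y‖ ≤ K * ‖x‖ ^ (m+1) := by
    intro y hy
    rw [idw_eq u hu _ hy, hiter]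
    calc ‖iteratedFDeriv ℝ (m+1) φ (y • x) (fun _ => x)‖
        ≤ ‖iteratedFDeriv ℝ (m+1) φ (y • x)‖ * ∏ _i : Fin (m+1), ‖x‖ :=
          (iteratedFDeriv ℝ (m+1) φ (y • x)).le_opNorm _
      _ ≤ K * ‖x‖ ^ (m+1) := by
          rw [Finset.prod_const, Finset.card_univ, Fintype.card_fin]
          apply mul_le_mul _ le_rfl (by positivity)
            ((norm_nonneg _).trans (hK 0 (by simp)))
          apply hK
          simp only [Metric.mem_closedBall, dist_zero_right, norm_smul]
          calc ‖y‖ * ‖x‖ ≤ 1 * 1 := by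
                apply mul_le_mul _ hx (norm_nonneg _) zero_le_one
                rw [Real.norm_eq_abs, abs_of_nonneg hy.1]
                exact hy.2
            _ = 1 := by norm_num
  have htay := taylor_mean_remainder_bound (f := u) (a := 0) (b := 1) (x := 1) (n := m)
    zero_le_one ((hu.of_le (by exact_mod_cast le_top)).contDiffOn) (by norm_num) hC
  have hval : taylorWithinEval u m (Icc 0 1) 0 1 =
      ∑ k ∈ Finset.range (m+1), ((Nat.factorial k : ℝ)⁻¹) • (iteratedFDeriv ℝ k φ 0 (fun _ => x)) := by
    rw [taylor_within_apply]
    refine Finset.sum_congr rfl fun k hk => ?_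
    rw [idw_eq u hu k (by norm_num), hiter]
    norm_num
  have hu1 : u 1 = φ x := by simp [hudef, hLy]
  rw [hval, hu1] at htay
  calc ‖φ x - ∑ k ∈ Finset.range (m+1), ((Nat.factorial k : ℝ)⁻¹) • (iteratedFDeriv ℝ k φ 0 (fun _ => x))‖
      ≤ K * ‖x‖ ^ (m+1) * (1 - 0) ^ (m+1) / Nat.factorial m := htay
    _ = K / Nat.factorial m * ‖x‖ ^ (m+1) := by ring


end HLpv

open HLpv

/-- existence of the Herrera–Lieberman principal value
lim_{ε→0⁺} ∫_{|f|²>ε} φ/f dV for f(x) = x^α on ℂ. -/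
theorem stmt1 (α : ℕ) (hα : 1 ≤ α) (φ : ℂ → ℂ)
    (hφ : ContDiff ℝ (⊤ : ℕ∞) φ) (hφc : HasCompactSupport φ) :
    ∃ L : ℂ, Tendsto
      (fun ε : ℝ => ∫ x in {x : ℂ | ε < ‖x ^ α‖ ^ 2}, φ x / x ^ α)
      (nhdsWithin 0 (Set.Ioi 0)) (nhds L) := by
  obtain ⟨m, rfl⟩ : ∃ m, α = m + 1 := ⟨α - 1, by omega⟩
  set n := m + 1 with hn
  -- the Taylor polynomial
  set P : ℂ → ℂ := fun x =>
    ∑ k ∈ Finset.range n, ((Nat.factorial k : ℝ)⁻¹) • (iteratedFDeriv ℝ k φ 0 (fun _ => x))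
    with hPdef
  have hPc : Continuous P := by
    refine continuous_finset_sum _ fun k _ => Continuous.fun_const_smul ?_ _
    exact (iteratedFDeriv ℝ k φ 0).cont.comp (continuous_pi fun _ => continuous_id)
  -- the integrable core
  set h : ℂ → ℂ := fun x => (φ x - (Metric.ball (0:ℂ) 1).indicator P x) / x ^ n with hhdef
  have hmeas : AEStronglyMeasurable h volume := by
    apply Measurable.aestronglyMeasurable
    rw [hhdef]
    simp only [div_eq_mul_inv]
    exact (hφ.continuous.measurable.sub
      (hPc.measurable.indicator measurableSet_ball)).mul
      ((measurable_id.pow_const n).inv)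
  -- Taylor remainder bound
  obtain ⟨C₀, hC₀⟩ := taylor_bound φ hφ m
  set C := max C₀ 0 with hC
  have hCb : ∀ x : ℂ, ‖x‖ ≤ 1 → ‖φ x - P x‖ ≤ C * ‖x‖ ^ n :=
    fun x hx => (hC₀ x hx).trans (by
      apply mul_le_mul (le_max_left _ _) le_rfl (by positivity)
      exact le_max_right _ _)
  -- bound for φ
  obtain ⟨Cφ, hCφ⟩ := hφ.continuous.bounded_above_of_compact_support hφc
  -- support radius
  obtain ⟨R₀, hR₀⟩ := hφc.isBounded.subset_closedBall (0:ℂ)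
  set R := max R₀ 1 with hR
  have hR1 : (1:ℝ) ≤ R := le_max_right _ _
  -- the domination
  set D : ℝ := C + Cφ with hD
  have hCφ0 : 0 ≤ Cφ := le_trans (norm_nonneg _) (hCφ 0)
  have hC0 : 0 ≤ C := le_max_right _ _
  have hdom : ∀ x : ℂ, x ≠ 0 →
      ‖h x‖ ≤ (Metric.closedBall (0:ℂ) R).indicator (fun _ => D) x := by
    intro x hx
    have hxpos : 0 < ‖x‖ := norm_pos_iff.mpr hx
    have hnorm : ‖h x‖ = ‖φ x - (Metric.ball (0:ℂ) 1).indicator P x‖ / ‖x‖ ^ n := by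
      rw [hhdef]
      simp [norm_div, norm_pow]
    by_cases h1 : ‖x‖ < 1
    · rw [Set.indicator_of_mem (Metric.mem_closedBall.mpr (by rw [dist_zero_right]; linarith))]
      rw [hnorm, Set.indicator_of_mem (Metric.mem_ball.mpr (by rwa [dist_zero_right]))]
      rw [div_le_iff₀ (by positivity)]
      calc ‖φ x - P x‖ ≤ C * ‖x‖ ^ n := hCb x h1.le
        _ ≤ D * ‖x‖ ^ n := by
            apply mul_le_mul _ le_rfl (by positivity) (by linarith)
            linarith
    · push_neg at h1
      have hb : (Metric.ball (0:ℂ) 1).indicator P x = 0 :=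
        Set.indicator_of_notMem (fun hmem => absurd
          (by rwa [Metric.mem_ball, dist_zero_right] at hmem) (not_lt.mpr h1)) _
      by_cases h2 : ‖x‖ ≤ R
      · rw [Set.indicator_of_mem (Metric.mem_closedBall.mpr (by rw [dist_zero_right]; linarith))]
        rw [hnorm, hb, sub_zero]
        calc ‖φ x‖ / ‖x‖ ^ n ≤ ‖φ x‖ := div_le_self (norm_nonneg _) (one_le_pow₀ h1)
          _ ≤ Cφ := hCφ x
          _ ≤ D := by linarith
      · push_neg at h2
        have hφ0 : φ x = 0 := by
          apply image_eq_zero_of_notMem_tsupport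
          intro hmem
          have := hR₀ hmem
          simp only [Metric.mem_closedBall, dist_zero_right] at this
          have : ‖x‖ ≤ R := this.trans (le_max_left _ _)
          linarith
        rw [Set.indicator_of_notMem (fun hmem => absurd
          (by rwa [Metric.mem_closedBall, dist_zero_right] at hmem) (not_le.mpr h2))]
        rw [hnorm, hφ0, hb, sub_zero, norm_zero, zero_div]
  -- h is integrable
  have h_int : Integrable h := by
    apply Integrable.mono' (g := (Metric.closedBall (0:ℂ) R).indicator (fun _ => D))
    · exact (integrableOn_const measure_closedBall_lt_top.ne).integrable_indicator
        Metric.isClosed_closedBall.measurableSet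
    · exact hmeas
    · have h0 : ∀ᵐ x : ℂ ∂volume, x ≠ 0 := by
        rw [ae_iff]
        have : {x : ℂ | ¬ x ≠ 0} = {0} := by ext x; simp
        rw [this]
        exact measure_singleton 0
      filter_upwards [h0] with x hx using hdom x hx
  -- the sets
  set S : ℝ → Set ℂ := fun ε => {x : ℂ | ε < ‖x ^ n‖ ^ 2} with hSdef
  have hSopen : ∀ ε, IsOpen (S ε) := fun ε =>
    isOpen_lt continuous_const ((continuous_pow n).norm.pow 2)
  have hSmeas : ∀ ε, MeasurableSet (S ε) := fun ε => (hSopen ε).measurableSet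
  -- membership characterization
  have hmemb : ∀ ε : ℝ, 0 < ε → ∀ x : ℂ,
      (x ∈ S ε ↔ ε ^ (((2*n : ℕ) : ℝ))⁻¹ < ‖x‖) := by
    intro ε hε x
    have hxn : ‖x ^ n‖ ^ 2 = ‖x‖ ^ (2*n) := by
      rw [norm_pow, ← pow_mul, mul_comm]
    rw [hSdef, mem_setOf_eq, hxn]
    constructor
    · intro hlt
      have h2n : (2*n) ≠ 0 := by omega
      have := Real.rpow_lt_rpow hε.le hlt (by positivity : (0:ℝ) < ((2*n : ℕ):ℝ)⁻¹)
      rwa [Real.pow_rpow_inv_natCast (norm_nonneg x) h2n] at this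
    · intro hlt
      have h2n : (2*n) ≠ 0 := by omega
      have := pow_lt_pow_left₀ hlt (Real.rpow_nonneg hε.le _) h2n
      rwa [Real.rpow_inv_natCast_pow hε.le h2n] at this
  -- dominated convergence
  have hA : Tendsto (fun ε : ℝ => ∫ x in S ε, h x) (nhdsWithin 0 (Set.Ioi 0)) (nhds (∫ x, h x)) := by
    have heq : (fun ε : ℝ => ∫ x in S ε, h x) = fun ε => ∫ x, (S ε).indicator h x :=
      funext fun ε => (integral_indicator (hSmeas ε)).symm
    rw [heq]
    apply tendsto_integral_filter_of_dominated_convergence (fun x => ‖h x‖)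
    · exact Eventually.of_forall fun ε => hmeas.indicator (hSmeas ε)
    · exact Eventually.of_forall fun ε => ae_of_all _ fun x => norm_indicator_le_norm_self _ _
    · exact h_int.norm
    · have h0 : ∀ᵐ x : ℂ ∂volume, x ≠ 0 := by
        rw [ae_iff]
        have : {x : ℂ | ¬ x ≠ 0} = {0} := by ext x; simp
        rw [this]
        exact measure_singleton 0
      filter_upwards [h0] with x hx
      have hpos : 0 < ‖x ^ n‖ ^ 2 :=
        pow_pos (norm_pos_iff.mpr (pow_ne_zero _ hx)) 2
      apply Tendsto.congr' _ tendsto_const_nhds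
      filter_upwards [Ioo_mem_nhdsGT_of_mem (⟨le_rfl, hpos⟩ : (0:ℝ) ∈ Ico (0:ℝ) (‖x ^ n‖ ^ 2))]
        with ε hε
      exact (Set.indicator_of_mem (by exact hε.2) h).symm
  -- eventual equality
  have hB : (fun ε : ℝ => ∫ x in S ε, φ x / x ^ n)
      =ᶠ[nhdsWithin 0 (Set.Ioi 0)] (fun ε => ∫ x in S ε, h x) := by
    filter_upwards [Ioo_mem_nhdsGT_of_mem (⟨le_rfl, zero_lt_one⟩ : (0:ℝ) ∈ Ico (0:ℝ) 1)]
      with ε hε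
    obtain ⟨hε0, hε1⟩ := hε
    set ρ : ℝ := ε ^ (((2*n : ℕ) : ℝ))⁻¹ with hρdef
    have hρpos : 0 < ρ := Real.rpow_pos_of_pos hε0 _
    have hSeq : S ε = {x : ℂ | ρ < ‖x‖} := Set.ext fun x => hmemb ε hε0 x
    -- pointwise decomposition
    have hkey : ∀ x : ℂ, φ x / x ^ n =
        h x + (Metric.ball (0:ℂ) 1).indicator (fun y => P y / y ^ n) x := by
      intro x
      by_cases hx : x ∈ Metric.ball (0:ℂ) 1
      · rw [Set.indicator_of_mem hx, hhdef]
        simp only [Set.indicator_of_mem hx]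
        rw [← add_div, sub_add_cancel]
      · rw [Set.indicator_of_notMem hx, hhdef]
        simp only [Set.indicator_of_notMem hx]
        rw [sub_zero, add_zero]
    -- integrability of the polynomial part on the annulus
    have hAnn : IsCompact (Metric.closedBall (0:ℂ) 1 \ Metric.ball 0 ρ) :=
      (isCompact_closedBall _ _).diff Metric.isOpen_ball
    have hsub : {x : ℂ | ρ < ‖x‖} ∩ Metric.ball 0 1 ⊆
        Metric.closedBall (0:ℂ) 1 \ Metric.ball 0 ρ := by
      rintro x ⟨hx1, hx2⟩
      simp only [mem_setOf_eq] at hx1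
      constructor
      · simp only [Metric.mem_closedBall, dist_zero_right]
        exact le_of_lt (by simpa [Metric.mem_ball, dist_zero_right] using hx2)
      · simp only [Metric.mem_ball, dist_zero_right, not_lt]
        exact hx1.le
    have hint_on : ∀ g : ℂ → ℂ, Continuous g →
        IntegrableOn (fun y => g y / y ^ n) ({x : ℂ | ρ < ‖x‖} ∩ Metric.ball 0 1) := by
      intro g hg
      apply IntegrableOn.mono_set _ hsub
      apply ContinuousOn.integrableOn_compact hAnn
      apply ContinuousOn.div hg.continuousOn (continuous_pow n).continuousOn
      rintro x ⟨_, hx2⟩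
      simp only [Metric.mem_ball, dist_zero_right, not_lt] at hx2
      exact pow_ne_zero _ (fun h0 => by simp [h0] at hx2; linarith)
    -- compute
    rw [MeasureTheory.setIntegral_congr_fun (hSmeas ε) (fun x _ => hkey x)]
    rw [integral_add h_int.integrableOn (by
      rw [integrable_indicator_iff measurableSet_ball]
      rw [IntegrableOn, Measure.restrict_restrict measurableSet_ball]
      rw [hSeq]
      exact (hint_on P hPc).mono_set (fun x hx => ⟨hx.2, hx.1⟩))]
    rw [MeasureTheory.setIntegral_indicator measurableSet_ball]
    have hzero : (∫ x in S ε ∩ Metric.ball (0:ℂ) 1, P x / x ^ n) = 0 := by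
      rw [hSeq]
      have hmeasA : MeasurableSet ({x : ℂ | ρ < ‖x‖} ∩ Metric.ball (0:ℂ) 1) :=
        ((isOpen_lt continuous_const continuous_norm).inter Metric.isOpen_ball).measurableSet
      have hsplit : ∀ y : ℂ, P y / y ^ n =
          ∑ k ∈ Finset.range n, ((Nat.factorial k : ℝ)⁻¹) •
            ((iteratedFDeriv ℝ k φ 0 (fun _ => y)) / y ^ n) := by
        intro y
        rw [hPdef, Finset.sum_div]
        exact Finset.sum_congr rfl fun k _ => smul_div_assoc _ _ _
      rw [MeasureTheory.setIntegral_congr_fun hmeasA (fun x _ => hsplit x)]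
      have hFi : ∀ k ∈ Finset.range n, Integrable (fun y : ℂ => ((Nat.factorial k : ℝ)⁻¹) •
          ((iteratedFDeriv ℝ k φ 0 (fun _ => y)) / y ^ n))
          (volume.restrict ({x : ℂ | ρ < ‖x‖} ∩ Metric.ball 0 1)) := by
        intro k _
        exact (hint_on (fun y : ℂ => iteratedFDeriv ℝ k φ 0 (fun _ => y))
          ((iteratedFDeriv ℝ k φ 0).cont.comp (continuous_pi fun _ => continuous_id))).smul
          ((Nat.factorial k : ℝ)⁻¹)
      rw [MeasureTheory.integral_finset_sum _ hFi]
      refine Finset.sum_eq_zero fun k hk => ?_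
      rw [integral_smul, annulus_zero n k (Finset.mem_range.mp hk)
        (iteratedFDeriv ℝ k φ 0) ρ hρpos, smul_zero]
    rw [hzero, add_zero]
  exact ⟨∫ x, h x, Tendsto.congr' hB.symm hA⟩
end

section
/- Let α, β ≥ 1 be integers and let χ : [0,∞) → ℝ be either the characteristic function 1_{[1,∞)} or a smooth function equal to 0 near 0 and 1 near ∞. Then for every φ ∈ C_c^∞(ℂ), lim_{ε→0⁺} ∫_ℂ χ(|x|^{2α̃}/ε) φ(x)/x^{α} dV(x) equals the principal value ∫ φ(x)/x^{α} dV(x) (in the principal value sense), for any integer α̃ ≥ 1; in particular, the limit is independent of α̃ and of the choice of χ. -/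
open MeasureTheory Filter Complex

noncomputable section

/-- Span of monomials `x^j * conj(x)^k` with `j + k < n`. -/
def Mo (n : ℕ) : Submodule ℂ (ℂ → ℂ) :=
  Submodule.span ℂ {q | ∃ j k : ℕ, j + k < n ∧ q = fun x : ℂ => x ^ j * (starRingEnd ℂ x) ^ k}

lemma Mo_mono {m n : ℕ} (h : m ≤ n) : Mo m ≤ Mo n := by
  apply Submodule.span_mono
  rintro q ⟨j, k, hjk, rfl⟩
  exact ⟨j, k, hjk.trans_le h, rfl⟩

lemma Mo_continuous {n : ℕ} {P : ℂ → ℂ} (hP : P ∈ Mo n) : Continuous P := by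
  induction hP using Submodule.span_induction with
  | mem q hq =>
      obtain ⟨j, k, _, rfl⟩ := hq
      exact (continuous_pow j).mul (Complex.continuous_conj.pow k)
  | zero => exact continuous_const
  | add _ _ _ _ h1 h2 => exact h1.add h2
  | smul c _ _ h => exact continuous_const.mul h

lemma Mo_mul_x {n : ℕ} {P : ℂ → ℂ} (hP : P ∈ Mo n) :
    (fun x => x * P x) ∈ Mo (n + 1) := by
  induction hP using Submodule.span_induction with
  | mem q hq =>
      obtain ⟨j, k, hjk, rfl⟩ := hq
      exact Submodule.subset_span ⟨j + 1, k, by omega, by ext x; ring⟩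
  | zero => simp only [Pi.zero_apply, mul_zero]; exact (Mo (n+1)).zero_mem
  | add P Q _ _ h1 h2 => 
      have := (Mo (n+1)).add_mem h1 h2
      convert this using 1; ext x; simp [mul_add]
  | smul c P _ h =>
      have := (Mo (n+1)).smul_mem c h
      convert this using 1; ext x; simp [Pi.smul_apply, smul_eq_mul]; ring

lemma Mo_mul_conj {n : ℕ} {P : ℂ → ℂ} (hP : P ∈ Mo n) :
    (fun x => (starRingEnd ℂ x) * P x) ∈ Mo (n + 1) := by
  induction hP using Submodule.span_induction with
  | mem q hq =>
      obtain ⟨j, k, hjk, rfl⟩ := hq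
      exact Submodule.subset_span ⟨j, k + 1, by omega, by ext x; ring⟩
  | zero => simp only [Pi.zero_apply, mul_zero]; exact (Mo (n+1)).zero_mem
  | add P Q _ _ h1 h2 =>
      have := (Mo (n+1)).add_mem h1 h2
      convert this using 1; ext x; simp [mul_add]
  | smul c P _ h =>
      have := (Mo (n+1)).smul_mem c h
      convert this using 1; ext x; simp [Pi.smul_apply, smul_eq_mul]; ring

lemma Mo_const (n : ℕ) (c : ℂ) : (fun _ : ℂ => c) ∈ Mo (n + 1) := by
  have : (fun x : ℂ => x ^ 0 * (starRingEnd ℂ x) ^ 0) ∈ Mo (n+1) :=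
    Submodule.subset_span ⟨0, 0, by omega, rfl⟩
  have := (Mo (n+1)).smul_mem c this
  convert this using 1; ext x; simp

/-- integrating a polynomial along the ray stays in the span -/
lemma Mo_ray_integral {n : ℕ} {P : ℂ → ℂ} (hP : P ∈ Mo n) :
    (fun x => ∫ t in (0:ℝ)..1, P ((t:ℝ) • x)) ∈ Mo n := by
  induction hP using Submodule.span_induction with
  | mem q hq =>
      obtain ⟨j, k, hjk, rfl⟩ := hq
      have key : (fun x : ℂ => ∫ t in (0:ℝ)..1, ((t:ℝ) • x) ^ j * (starRingEnd ℂ ((t:ℝ) • x)) ^ k)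
          = fun x : ℂ => ((j + k + 1 : ℝ)⁻¹ : ℂ) * (x ^ j * (starRingEnd ℂ x) ^ k) := by
        ext x
        have : ∀ t : ℝ, ((t:ℝ) • x) ^ j * (starRingEnd ℂ ((t:ℝ) • x)) ^ k
            = ((t:ℂ) ^ (j + k)) * (x ^ j * (starRingEnd ℂ x) ^ k) := by
          intro t
          simp [Complex.real_smul, map_mul, mul_pow, pow_add]
          ring
        rw [intervalIntegral.integral_congr (fun t _ => this t),
          intervalIntegral.integral_mul_const]
        congr 1
        have : ∀ t : ℝ, ((t:ℂ) ^ (j+k)) = (((t ^ (j+k) : ℝ)) : ℂ) := by intro t; push_cast; ring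
        rw [intervalIntegral.integral_congr (fun t _ => this t),
          intervalIntegral.integral_ofReal, integral_pow]
        push_cast
        simp
      rw [key]
      exact (Mo n).smul_mem _ (Submodule.subset_span ⟨j, k, hjk, rfl⟩)
  | zero => simp only [Pi.zero_apply, intervalIntegral.integral_zero]; exact (Mo n).zero_mem
  | add P Q hPm hQm h1 h2 =>
      have := (Mo n).add_mem h1 h2
      convert this using 1
      ext x
      simp only [Pi.add_apply]
      exact intervalIntegral.integral_add
        (((Mo_continuous hPm).comp (continuous_id.smul continuous_const)).intervalIntegrable _ _)
        (((Mo_continuous hQm).comp (continuous_id.smul continuous_const)).intervalIntegrable _ _)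
  | smul c P hPm h =>
      have := (Mo n).smul_mem c h
      convert this using 1
      ext x
      simp only [Pi.smul_apply, smul_eq_mul]
      rw [← intervalIntegral.integral_const_mul]

theorem taylor_aux (n : ℕ) : ∀ f : ℂ → ℂ, ContDiff ℝ (⊤ : ℕ∞) f →
    ∃ P ∈ Mo n, ∃ C δ : ℝ, 0 ≤ C ∧ 0 < δ ∧
      ∀ x : ℂ, ‖x‖ ≤ δ → ‖f x - P x‖ ≤ C * ‖x‖ ^ n := by
  induction n with
  | zero =>
      intro f hf
      refine ⟨0, (Mo 0).zero_mem, ‖f 0‖ + 1, ?_⟩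
      obtain ⟨δ, hδ, hd⟩ := Metric.continuousAt_iff.mp (hf.continuous.continuousAt (x := 0))
        1 one_pos
      refine ⟨δ/2, by positivity, half_pos hδ, fun x hx => ?_⟩
      have h1 : dist (f x) (f 0) < 1 := hd (by
        simpa [Complex.dist_eq, sub_zero] using lt_of_le_of_lt hx (half_lt_self hδ))
      have : ‖f x - f 0‖ < 1 := by rwa [Complex.dist_eq] at h1
      simp only [Pi.zero_apply, sub_zero, pow_zero, mul_one]
      calc ‖f x‖ ≤ ‖f x - f 0‖ + ‖f 0‖ := by
            simpa using norm_add_le (f x - f 0) (f 0)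
        _ ≤ ‖f 0‖ + 1 := by linarith
  | succ n ih =>
      intro f hf
      set f₁ : ℂ → ℂ := fun y => fderiv ℝ f y 1 with hf₁def
      set f₂ : ℂ → ℂ := fun y => fderiv ℝ f y I with hf₂def
      have hf₁ : ContDiff ℝ (⊤ : ℕ∞) f₁ := (hf.fderiv_right (by simp)).clm_apply contDiff_const
      have hf₂ : ContDiff ℝ (⊤ : ℕ∞) f₂ := (hf.fderiv_right (by simp)).clm_apply contDiff_const
      obtain ⟨P₁, hP₁m, C₁, δ₁, hC₁, hδ₁, hP₁⟩ := ih f₁ hf₁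
      obtain ⟨P₂, hP₂m, C₂, δ₂, hC₂, hδ₂, hP₂⟩ := ih f₂ hf₂
      set Q₁ : ℂ → ℂ := fun x => ∫ t in (0:ℝ)..1, P₁ ((t:ℝ) • x) with hQ₁def
      set Q₂ : ℂ → ℂ := fun x => ∫ t in (0:ℝ)..1, P₂ ((t:ℝ) • x) with hQ₂def
      have hQ₁m : Q₁ ∈ Mo n := Mo_ray_integral hP₁m
      have hQ₂m : Q₂ ∈ Mo n := Mo_ray_integral hP₂m
      set P : ℂ → ℂ := fun x => f 0 + (x.re : ℂ) * Q₁ x + (x.im : ℂ) * Q₂ x with hPdef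
      have hPm : P ∈ Mo (n + 1) := by
        have h1 : P = (fun _ : ℂ => f 0)
            + (1/2 : ℂ) • ((fun x => x * Q₁ x) + fun x => (starRingEnd ℂ x) * Q₁ x)
            + (1/(2*I) : ℂ) • ((fun x => x * Q₂ x) - fun x => (starRingEnd ℂ x) * Q₂ x) := by
          funext x
          have hre : (x.re : ℂ) = (x + (starRingEnd ℂ) x) / 2 := by
            rw [Complex.add_conj]
            push_cast
            ring
          have him : (x.im : ℂ) = (x - (starRingEnd ℂ) x) / (2 * I) := by
            rw [Complex.sub_conj,
              eq_div_iff (by simp [Complex.I_ne_zero] : (2 * I : ℂ) ≠ 0)]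
            push_cast
            ring
          simp only [Pi.add_apply, Pi.smul_apply, Pi.sub_apply, smul_eq_mul, hPdef]
          rw [hre, him]; ring
        rw [h1]
        exact ((Mo (n+1)).add_mem
          ((Mo (n+1)).add_mem (Mo_const n (f 0))
            ((Mo (n+1)).smul_mem _ ((Mo (n+1)).add_mem (Mo_mul_x hQ₁m) (Mo_mul_conj hQ₁m))))
          ((Mo (n+1)).smul_mem _ ((Mo (n+1)).sub_mem (Mo_mul_x hQ₂m) (Mo_mul_conj hQ₂m))))
      refine ⟨P, hPm, C₁ + C₂, min δ₁ δ₂, by positivity, lt_min hδ₁ hδ₂, fun x hx => ?_⟩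
      -- FTC along the ray
      have hderiv : ∀ t : ℝ, HasDerivAt (fun s : ℝ => f ((s:ℝ) • x))
          ((x.re : ℂ) * f₁ ((t:ℝ) • x) + (x.im : ℂ) * f₂ ((t:ℝ) • x)) t := by
        intro t
        have hd1 : HasDerivAt (fun s : ℝ => (s:ℝ) • x) ((1:ℝ) • x) t :=
          (hasDerivAt_id t).smul_const x
        have hdf := (hf.differentiable (by simp) (t • x)).hasFDerivAt
        have := hdf.comp_hasDerivAt t hd1
        refine this.congr_deriv ?_
        symm
        have hx' : (1:ℝ) • x = x.re • (1:ℂ) + x.im • I := by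
          simp only [one_smul, Complex.real_smul, mul_one]
          exact (Complex.re_add_im x).symm
        rw [hx', map_add, _root_.map_smul, _root_.map_smul]
        simp [hf₁def, hf₂def, Complex.real_smul]
      have hcont1 : Continuous fun t : ℝ => f₁ ((t:ℝ) • x) :=
        hf₁.continuous.comp (continuous_id.smul continuous_const)
      have hcont2 : Continuous fun t : ℝ => f₂ ((t:ℝ) • x) :=
        hf₂.continuous.comp (continuous_id.smul continuous_const)
      have hcontP1 : Continuous fun t : ℝ => P₁ ((t:ℝ) • x) :=
        (Mo_continuous hP₁m).comp (continuous_id.smul continuous_const)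
      have hcontP2 : Continuous fun t : ℝ => P₂ ((t:ℝ) • x) :=
        (Mo_continuous hP₂m).comp (continuous_id.smul continuous_const)
      have hftc : f x - f 0 = ∫ t in (0:ℝ)..1,
          ((x.re : ℂ) * f₁ ((t:ℝ) • x) + (x.im : ℂ) * f₂ ((t:ℝ) • x)) := by
        have := intervalIntegral.integral_eq_sub_of_hasDerivAt
          (f := fun s : ℝ => f ((s:ℝ) • x)) (fun t _ => hderiv t)
          (((continuous_const.mul hcont1).add (continuous_const.mul hcont2)).intervalIntegrable 0 1)
        rw [this]
        simp
      have hkey : f x - P x = ∫ t in (0:ℝ)..1,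
          ((x.re : ℂ) * (f₁ ((t:ℝ) • x) - P₁ ((t:ℝ) • x))
            + (x.im : ℂ) * (f₂ ((t:ℝ) • x) - P₂ ((t:ℝ) • x))) := by
        have e1 : f x - P x = (f x - f 0) - (x.re : ℂ) * Q₁ x - (x.im : ℂ) * Q₂ x := by
          simp only [hPdef]; ring
        rw [e1, hftc, hQ₁def, hQ₂def, ← intervalIntegral.integral_const_mul,
          ← intervalIntegral.integral_const_mul,
          ← intervalIntegral.integral_sub
            (f := fun t : ℝ => (x.re : ℂ) * f₁ ((t:ℝ) • x) + (x.im : ℂ) * f₂ ((t:ℝ) • x))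
            (g := fun t : ℝ => (x.re : ℂ) * P₁ ((t:ℝ) • x))
            (((continuous_const.mul hcont1).add (continuous_const.mul hcont2)).intervalIntegrable 0 1)
            ((continuous_const.mul hcontP1).intervalIntegrable 0 1),
          ← intervalIntegral.integral_sub
            (f := fun t : ℝ => (x.re : ℂ) * f₁ ((t:ℝ) • x) + (x.im : ℂ) * f₂ ((t:ℝ) • x)
              - (x.re : ℂ) * P₁ ((t:ℝ) • x))
            (g := fun t : ℝ => (x.im : ℂ) * P₂ ((t:ℝ) • x))
            ((((continuous_const.mul hcont1).add (continuous_const.mul hcont2)).sub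
              (continuous_const.mul hcontP1)).intervalIntegrable 0 1)
            ((continuous_const.mul hcontP2).intervalIntegrable 0 1)]
        congr 1
        funext t
        ring
      rw [hkey]
      have hb : ∀ t ∈ Set.uIoc (0:ℝ) 1,
          ‖(x.re : ℂ) * (f₁ ((t:ℝ) • x) - P₁ ((t:ℝ) • x))
            + (x.im : ℂ) * (f₂ ((t:ℝ) • x) - P₂ ((t:ℝ) • x))‖
            ≤ (C₁ + C₂) * ‖x‖ ^ (n+1) := by
        intro t ht
        rw [Set.uIoc_of_le (zero_le_one)] at ht
        have ht0 : 0 < t := ht.1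
        have ht1 : t ≤ 1 := ht.2
        have htx : ‖(t:ℝ) • x‖ ≤ ‖x‖ := by
          rw [norm_smul, Real.norm_eq_abs, abs_of_pos ht0]
          nlinarith [norm_nonneg x]
        have htx1 : ‖(t:ℝ) • x‖ ≤ δ₁ := le_trans htx (le_trans hx (min_le_left _ _))
        have htx2 : ‖(t:ℝ) • x‖ ≤ δ₂ := le_trans htx (le_trans hx (min_le_right _ _))
        have h1 := hP₁ _ htx1
        have h2 := hP₂ _ htx2
        have hpow : ‖(t:ℝ) • x‖ ^ n ≤ ‖x‖ ^ n := pow_le_pow_left₀ (norm_nonneg _) htx n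
        calc ‖(x.re : ℂ) * (f₁ ((t:ℝ) • x) - P₁ ((t:ℝ) • x))
              + (x.im : ℂ) * (f₂ ((t:ℝ) • x) - P₂ ((t:ℝ) • x))‖
            ≤ ‖(x.re : ℂ)‖ * ‖f₁ ((t:ℝ) • x) - P₁ ((t:ℝ) • x)‖
              + ‖(x.im : ℂ)‖ * ‖f₂ ((t:ℝ) • x) - P₂ ((t:ℝ) • x)‖ := by
              refine le_trans (norm_add_le _ _) ?_
              simp [norm_mul]
          _ ≤ ‖x‖ * (C₁ * ‖x‖ ^ n) + ‖x‖ * (C₂ * ‖x‖ ^ n) := by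
              have hre : ‖(x.re : ℂ)‖ ≤ ‖x‖ := by
                rw [Complex.norm_real]
                exact Complex.abs_re_le_norm x
              have him : ‖(x.im : ℂ)‖ ≤ ‖x‖ := by
                rw [Complex.norm_real]
                exact Complex.abs_im_le_norm x
              have g1 : ‖f₁ ((t:ℝ) • x) - P₁ ((t:ℝ) • x)‖ ≤ C₁ * ‖x‖ ^ n :=
                le_trans h1 (by nlinarith)
              have g2 : ‖f₂ ((t:ℝ) • x) - P₂ ((t:ℝ) • x)‖ ≤ C₂ * ‖x‖ ^ n :=
                le_trans h2 (by nlinarith)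
              have := norm_nonneg (f₁ ((t:ℝ) • x) - P₁ ((t:ℝ) • x))
              have := norm_nonneg (f₂ ((t:ℝ) • x) - P₂ ((t:ℝ) • x))
              have := norm_nonneg x
              nlinarith
          _ = (C₁ + C₂) * ‖x‖ ^ (n+1) := by ring
      have := intervalIntegral.norm_integral_le_of_norm_le_const hb
      simpa using this

lemma rot_integral (a : Circle) (g : ℂ → ℂ) : (∫ x : ℂ, g ((a:ℂ) * x)) = ∫ x : ℂ, g x := by
  have h := (rotation a).measurePreserving.integral_comp
    (rotation a).toHomeomorph.measurableEmbedding g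
  simpa using h

lemma weight_vanish {α : ℕ} (hα : 1 ≤ α) {P : ℂ → ℂ} (hP : P ∈ Mo α)
    (W : ℂ → ℝ) (hWmeas : Measurable W)
    (hWrad : ∀ (c x : ℂ), ‖c‖ = 1 → W (c * x) = W x)
    {r R M' : ℝ} (hr : 0 < r)
    (hW0 : ∀ x : ℂ, ‖x‖ < r → W x = 0)
    (hWR : ∀ x : ℂ, R < ‖x‖ → W x = 0)
    (hWM : ∀ x, |W x| ≤ M') :
    Integrable (fun x : ℂ => (W x : ℂ) * (P x / x ^ α)) ∧
      (∫ x : ℂ, (W x : ℂ) * (P x / x ^ α)) = 0 := by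
  have hM' : 0 ≤ M' := le_trans (abs_nonneg _) (hWM 0)
  induction hP using Submodule.span_induction with
  | mem q hq =>
      obtain ⟨j, k, hjk, rfl⟩ := hq
      set ψ : ℂ → ℂ := fun x => (W x : ℂ) * ((x ^ j * (starRingEnd ℂ x) ^ k) / x ^ α) with hψdef
      have hψmeas : AEStronglyMeasurable ψ volume := by
        apply Measurable.aestronglyMeasurable
        exact (Complex.measurable_ofReal.comp hWmeas).mul
          ((((measurable_id.pow_const j).mul
            (Complex.continuous_conj.measurable.pow_const k)).div (measurable_id.pow_const α)))
      set K : ℝ := M' * (max R 1) ^ (j + k) / r ^ α with hKdef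
      have hK : 0 ≤ K := by positivity
      have hbound : ∀ x : ℂ, ‖ψ x‖ ≤
          Set.indicator (Metric.closedBall (0:ℂ) R) (fun _ => K) x := by
        intro x
        by_cases hxR : x ∈ Metric.closedBall (0:ℂ) R
        · rw [Set.indicator_of_mem hxR]
          by_cases hxr : ‖x‖ < r
          · simp [hψdef, hW0 x hxr, hK]
          · push_neg at hxr
            have hx0 : x ≠ 0 := by
              intro h; rw [h] at hxr; simp at hxr; linarith
            have hxRle : ‖x‖ ≤ R := by
              simpa [Complex.dist_eq, Metric.mem_closedBall] using hxR
            have hnorm : ‖ψ x‖ = |W x| * (‖x‖ ^ (j + k) / ‖x‖ ^ α) := by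
              simp [hψdef, norm_mul, norm_div, norm_pow, Complex.norm_real, pow_add]
            rw [hnorm, hKdef]
            have h1 : ‖x‖ ^ (j+k) ≤ (max R 1) ^ (j+k) :=
              pow_le_pow_left₀ (norm_nonneg _) (le_trans hxRle (le_max_left _ _)) _
            have h2 : r ^ α ≤ ‖x‖ ^ α := pow_le_pow_left₀ (le_of_lt hr) hxr _
            have h3 : (0:ℝ) < ‖x‖ ^ α := pow_pos (lt_of_lt_of_le hr hxr) α
            have h4 : (0:ℝ) < r ^ α := by positivity
            have hdiv : ‖x‖ ^ (j+k) / ‖x‖ ^ α ≤ (max R 1) ^ (j+k) / r ^ α := by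
              apply div_le_div₀ (by positivity) h1 h4 h2
            calc |W x| * (‖x‖ ^ (j + k) / ‖x‖ ^ α)
                ≤ M' * ((max R 1) ^ (j+k) / r ^ α) := by
                  apply mul_le_mul (hWM x) hdiv (by positivity) hM'
              _ = M' * (max R 1) ^ (j + k) / r ^ α := by ring
        · rw [Set.indicator_of_notMem hxR]
          have : R < ‖x‖ := by
            simp only [Metric.mem_closedBall, Complex.dist_eq, sub_zero, not_le] at hxR
            simpa using hxR
          simp [hψdef, hWR x this]
      have hint : Integrable ψ := by
        refine Integrable.mono' ?_ hψmeas (Filter.Eventually.of_forall hbound)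
        rw [integrable_indicator_iff measurableSet_closedBall]
        exact integrableOn_const measure_closedBall_lt_top.ne
      refine ⟨hint, ?_⟩
      -- rotation argument
      set N : ℕ := α + k - j with hNdef
      have hjα : j < α := by omega
      have hN1 : 1 ≤ N := by omega
      set ω : ℂ := Complex.exp ((Real.pi / N : ℝ) * I) with hωdef
      have hω1 : ‖ω‖ = 1 := by
        rw [hωdef]
        exact Complex.norm_exp_ofReal_mul_I _
      have hω0 : ω ≠ 0 := Complex.exp_ne_zero _
      have hωN : ω ^ N = -1 := by
        rw [hωdef, ← Complex.exp_nat_mul]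
        have hNC : (N:ℂ) ≠ 0 := Nat.cast_ne_zero.mpr (by omega)
        have : (N:ℂ) * ((Real.pi / N : ℝ) * I) = Real.pi * I := by
          push_cast
          field_simp
        rw [this, Complex.exp_pi_mul_I]
      have hωconj : (starRingEnd ℂ) ω = ω⁻¹ := by
        rw [hωdef, ← Complex.exp_conj, ← Complex.exp_neg]
        congr 1
        simp [map_mul, Complex.conj_I]
      have hc : ω ^ j * ((starRingEnd ℂ) ω) ^ k / ω ^ α = -1 := by
        rw [hωconj, inv_pow]
        rw [div_eq_iff (pow_ne_zero _ hω0)]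
        field_simp
        have hsplit : ω ^ α * ω ^ k = ω ^ j * ω ^ N := by
          rw [← pow_add, ← pow_add]; congr 1; omega
        rw [show ω ^ k * ω ^ α = ω ^ j * ω ^ N by rw [mul_comm]; exact hsplit, hωN]
        ring
      have hpoint : ∀ x : ℂ, ψ (ω * x) = -ψ x := by
        intro x
        by_cases hx : x = 0
        · subst hx
          have : W 0 = 0 := hW0 0 (by simpa using hr)
          simp [hψdef, this]
        · have hWx : W (ω * x) = W x := hWrad ω x hω1
          rw [hψdef]
          simp only [hWx, map_mul]
          rw [mul_pow, mul_pow, mul_pow]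
          have hxα : x ^ α ≠ 0 := pow_ne_zero _ hx
          have hωα : ω ^ α ≠ 0 := pow_ne_zero _ hω0
          have : ω ^ j * x ^ j * ((starRingEnd ℂ) ω ^ k * (starRingEnd ℂ) x ^ k) /
              (ω ^ α * x ^ α) = (ω ^ j * (starRingEnd ℂ) ω ^ k / ω ^ α) *
              (x ^ j * (starRingEnd ℂ) x ^ k / x ^ α) := by
            field_simp
          rw [this, hc]
          ring
      have h1 : (∫ x : ℂ, ψ ((ω:ℂ) * x)) = ∫ x, ψ x := by
        have hωc : ω ∈ Metric.sphere (0:ℂ) 1 := by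
          simpa [Complex.dist_eq] using hω1
        exact rot_integral ⟨ω, hωc⟩ ψ
      have h2 : (∫ x : ℂ, ψ (ω * x)) = -∫ x, ψ x := by
        rw [show (fun x : ℂ => ψ (ω * x)) = fun x => -ψ x from funext hpoint]
        exact integral_neg ψ
      have h3 : (∫ x, ψ x) + ∫ x, ψ x = 0 := by
        nth_rewrite 1 [← h1]
        rw [h2]; ring
      exact add_self_eq_zero.mp h3
  | zero =>
      constructor
      · simpa using integrable_zero ℂ ℂ (volume : Measure ℂ)
      · simp
  | add P Q hPm hQm h1 h2 =>
      have e : (fun x : ℂ => (W x : ℂ) * ((P + Q) x / x ^ α))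
          = fun x => (W x : ℂ) * (P x / x ^ α) + (W x : ℂ) * (Q x / x ^ α) := by
        funext x
        simp only [Pi.add_apply, add_div, mul_add]
      constructor
      · rw [e]; exact h1.1.add h2.1
      · rw [e, integral_add h1.1 h2.1, h1.2, h2.2]; simp
  | smul c P hPm h =>
      have e : (fun x : ℂ => (W x : ℂ) * ((c • P) x / x ^ α))
          = fun x => c • ((W x : ℂ) * (P x / x ^ α)) := by
        funext x
        simp only [Pi.smul_apply, smul_eq_mul]
        ring
      constructor
      · rw [e]; exact h.1.smul c
      · rw [e, integral_smul, h.2, smul_zero]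

/-- for χ = 1_{[1,∞)} or a smooth approximation (0 near 0, 1 near ∞),
the ε-regularization ∫ χ(|x^{α̃}|²/ε) φ/x^α dV tends, as ε → 0⁺, to the principal
value of 1/x^α on φ, independently of α̃ ≥ 1 and of χ. -/
theorem stmt4 (α αt : ℕ) (hα : 1 ≤ α) (hαt : 1 ≤ αt)
    (χ : ℝ → ℝ)
    (hχ : (χ = fun t => if 1 ≤ t then 1 else 0) ∨
      (ContDiff ℝ (⊤ : ℕ∞) χ ∧ (∀ᶠ t in nhds 0, χ t = 0) ∧ (∀ᶠ t in atTop, χ t = 1)))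
    (φ : ℂ → ℂ) (hφ : ContDiff ℝ (⊤ : ℕ∞) φ) (hφc : HasCompactSupport φ) :
    ∃ L : ℂ,
      Tendsto (fun ε : ℝ => ∫ x in {x : ℂ | ε < ‖x‖}, φ x / x ^ α)
        (nhdsWithin 0 (Set.Ioi 0)) (nhds L) ∧
      Tendsto (fun ε : ℝ => ∫ x : ℂ, (χ (‖x‖ ^ (2 * αt) / ε) : ℂ) * φ x / x ^ α)
        (nhdsWithin 0 (Set.Ioi 0)) (nhds L) := by
  -- extract properties of χ
  obtain ⟨a, ha, b, M, hχmeas, hχ0, hχ1, hχM⟩ :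
      ∃ a : ℝ, 0 < a ∧ ∃ b M : ℝ, Measurable χ ∧
        (∀ s : ℝ, 0 ≤ s → s < a → χ s = 0) ∧ (∀ s : ℝ, b ≤ s → χ s = 1) ∧
        (∀ s : ℝ, 0 ≤ s → |χ s| ≤ M) := by
    rcases hχ with h | ⟨hsm, h0, h1⟩
    · refine ⟨1, one_pos, 1, 1, ?_, ?_, ?_, ?_⟩
      · rw [h]
        exact Measurable.ite (measurableSet_le measurable_const measurable_id)
          measurable_const measurable_const
      · intro s _ hs; rw [h]; simp only [if_neg (not_le.mpr hs)]
      · intro s hs; rw [h]; simp only [if_pos hs]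
      · intro s _; rw [h]; dsimp only; split <;> simp
    · obtain ⟨a, ha, h0'⟩ := Metric.eventually_nhds_iff.mp h0
      obtain ⟨b, h1'⟩ := eventually_atTop.mp h1
      set b' := max b 0 with hb'def
      obtain ⟨M0, hM0⟩ := (isCompact_Icc (a := (0:ℝ)) (b := b')).exists_bound_of_continuousOn
        hsm.continuous.continuousOn
      refine ⟨a, ha, b', max M0 1, hsm.continuous.measurable, ?_, ?_, ?_⟩
      · intro s hs0 hsa
        apply h0'
        rw [Real.dist_eq, sub_zero, _root_.abs_of_nonneg hs0]
        exact hsa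
      · intro s hs
        exact h1' s (le_trans (le_max_left _ _) hs)
      · intro s hs
        by_cases hsb : s ≤ b'
        · exact le_trans (hM0 s ⟨hs, hsb⟩) (le_max_left _ _)
        · push_neg at hsb
          rw [h1' s (le_trans (le_max_left _ _) hsb.le)]
          simpa using le_max_right M0 1
  have hM0 : 0 ≤ M := le_trans (abs_nonneg _) (hχM 0 le_rfl)
  -- Taylor expansion of φ at 0 to order α
  obtain ⟨P, hPm, C, δ, hC, hδ, hT⟩ := taylor_aux α φ hφ
  obtain ⟨B, hB⟩ := hφc.exists_bound_of_continuous hφ.continuous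
  have hB0 : 0 ≤ B := le_trans (norm_nonneg _) (hB 0)
  -- the integrable comparison function
  set g : ℂ → ℂ := fun x =>
    φ x / x ^ α - Set.indicator (Metric.closedBall 0 δ) (fun y => P y / y ^ α) x with hgdef
  have hgmeas : Measurable g := by
    have h1 : Measurable fun x : ℂ => φ x / x ^ α :=
      (hφ.continuous.measurable).div (measurable_id.pow_const α)
    have h2 : Measurable fun x : ℂ => P x / x ^ α :=
      ((Mo_continuous hPm).measurable).div (measurable_id.pow_const α)
    exact h1.sub (h2.indicator measurableSet_closedBall)
  set Kg : ℝ := max C (B / δ ^ α) with hKgdef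
  have hKg0 : 0 ≤ Kg := le_trans hC (le_max_left _ _)
  set Ks : Set ℂ := tsupport φ ∪ Metric.closedBall 0 δ with hKsdef
  have hKsm : MeasurableSet Ks :=
    (isClosed_tsupport φ).measurableSet.union measurableSet_closedBall
  have hKsc : IsCompact Ks := hφc.union (isCompact_closedBall _ _)
  have hgbd : ∀ x : ℂ, ‖g x‖ ≤ Set.indicator Ks (fun _ => Kg) x := by
    intro x
    by_cases hxδ : x ∈ Metric.closedBall (0:ℂ) δ
    · have hxδ' : ‖x‖ ≤ δ := by simpa [Complex.dist_eq] using hxδ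
      have hmem : x ∈ Ks := Set.mem_union_right _ hxδ
      rw [Set.indicator_of_mem hmem, hgdef]
      simp only [Set.indicator_of_mem hxδ]
      rw [div_sub_div_same]
      by_cases hx0 : x = 0
      · subst hx0
        rw [zero_pow (by omega)]
        simpa using hKg0
      · rw [norm_div, norm_pow]
        have hxpos : 0 < ‖x‖ ^ α := pow_pos (norm_pos_iff.mpr hx0) α
        rw [div_le_iff₀ hxpos]
        calc ‖φ x - P x‖ ≤ C * ‖x‖ ^ α := hT x hxδ'
          _ ≤ Kg * ‖x‖ ^ α := by
              apply mul_le_mul_of_nonneg_right (le_max_left _ _) (le_of_lt hxpos)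
    · have hxδ' : δ < ‖x‖ := by
        simp only [Metric.mem_closedBall, Complex.dist_eq, sub_zero, not_le] at hxδ
        simpa using hxδ
      rw [hgdef]
      simp only [Set.indicator_of_notMem hxδ, sub_zero]
      by_cases hxs : x ∈ tsupport φ
      · rw [Set.indicator_of_mem (Set.mem_union_left _ hxs : x ∈ Ks)]
        rw [norm_div, norm_pow]
        have hxpos : 0 < ‖x‖ ^ α := pow_pos (lt_trans hδ hxδ') α
        rw [div_le_iff₀ hxpos]
        calc ‖φ x‖ ≤ B := hB x
          _ = (B / δ ^ α) * δ ^ α := by field_simp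
          _ ≤ Kg * ‖x‖ ^ α := by
              apply mul_le_mul (le_max_right _ _)
                (pow_le_pow_left₀ (le_of_lt hδ) (le_of_lt hxδ') α) (by positivity) hKg0
      · by_cases hmem : x ∈ Ks
        · rw [Set.indicator_of_mem hmem]
          rw [image_eq_zero_of_notMem_tsupport hxs]
          simpa using hKg0
        · rw [Set.indicator_of_notMem hmem]
          rw [image_eq_zero_of_notMem_tsupport hxs]
          simp
  have hg_int : Integrable g := by
    refine Integrable.mono' ?_ hgmeas.aestronglyMeasurable (Filter.Eventually.of_forall hgbd)
    rw [integrable_indicator_iff hKsm]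
    exact integrableOn_const hKsc.measure_lt_top.ne
  -- the key bridging identity
  have key : ∀ w : ℂ → ℝ, Measurable w → (∀ (c x : ℂ), ‖c‖ = 1 → w (c * x) = w x) →
      ∀ r : ℝ, 0 < r → (∀ x : ℂ, ‖x‖ < r → w x = 0) → ∀ Mw : ℝ, (∀ x, |w x| ≤ Mw) →
      (∫ x : ℂ, (w x : ℂ) * (φ x / x ^ α)) = ∫ x : ℂ, (w x : ℂ) * g x := by
    intro w hwmeas hwrad r hr hw0 Mw hwM
    set W' : ℂ → ℝ := fun x =>
      w x * Set.indicator (Metric.closedBall 0 δ) (fun _ => (1:ℝ)) x with hW'def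
    have hW'meas : Measurable W' :=
      hwmeas.mul (measurable_const.indicator measurableSet_closedBall)
    have hW'rad : ∀ (c x : ℂ), ‖c‖ = 1 → W' (c * x) = W' x := by
      intro c x hc
      rw [hW'def]
      dsimp only
      rw [hwrad c x hc]
      congr 1
      by_cases hx : x ∈ Metric.closedBall (0:ℂ) δ
      · have : c * x ∈ Metric.closedBall (0:ℂ) δ := by
          simp only [Metric.mem_closedBall, Complex.dist_eq, sub_zero] at hx ⊢
          calc ‖c * x‖ = ‖c‖ * ‖x‖ := by
                simp [map_mul]
            _ ≤ δ := by rw [hc, one_mul]; simpa using hx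
        rw [Set.indicator_of_mem hx, Set.indicator_of_mem this]
      · have : c * x ∉ Metric.closedBall (0:ℂ) δ := by
          intro hmem
          apply hx
          simp only [Metric.mem_closedBall, Complex.dist_eq, sub_zero] at hmem ⊢
          have : ‖c * x‖ = ‖c‖ * ‖x‖ := by simp [map_mul]
          rw [this, hc, one_mul] at hmem
          simpa using hmem
        rw [Set.indicator_of_notMem hx, Set.indicator_of_notMem this]
    have hW'0 : ∀ x : ℂ, ‖x‖ < r → W' x = 0 := by
      intro x hx; rw [hW'def]; dsimp only; rw [hw0 x hx, zero_mul]
    have hW'R : ∀ x : ℂ, δ < ‖x‖ → W' x = 0 := by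
      intro x hx
      rw [hW'def]
      dsimp only
      have : x ∉ Metric.closedBall (0:ℂ) δ := by
        simp only [Metric.mem_closedBall, Complex.dist_eq, sub_zero, not_le]
        simpa using hx
      rw [Set.indicator_of_notMem this, mul_zero]
    have hW'M : ∀ x, |W' x| ≤ Mw := by
      intro x
      rw [hW'def]
      dsimp only
      rw [abs_mul]
      by_cases hx : x ∈ Metric.closedBall (0:ℂ) δ
      · rw [Set.indicator_of_mem hx]
        simpa using hwM x
      · rw [Set.indicator_of_notMem hx]
        simpa using le_trans (abs_nonneg _) (hwM x)
    obtain ⟨hWint, hWzero⟩ := weight_vanish hα hPm W' hW'meas hW'rad hr hW'0 hW'R hW'M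
    have hMw0 : 0 ≤ Mw := le_trans (abs_nonneg _) (hwM 0)
    have hwg_int : Integrable fun x : ℂ => (w x : ℂ) * g x := by
      refine Integrable.mono' (hg_int.norm.const_mul Mw)
        ((Complex.measurable_ofReal.comp hwmeas).mul hgmeas).aestronglyMeasurable
        (Filter.Eventually.of_forall fun x => ?_)
      rw [norm_mul, Complex.norm_real]
      exact mul_le_mul_of_nonneg_right (hwM x) (norm_nonneg _)
    have hsplit : (fun x : ℂ => (w x : ℂ) * (φ x / x ^ α))
        = fun x => (w x : ℂ) * g x + (W' x : ℂ) * (P x / x ^ α) := by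
      funext x
      rw [hgdef, hW'def]
      dsimp only
      push_cast
      by_cases hx : x ∈ Metric.closedBall (0:ℂ) δ
      · rw [Set.indicator_of_mem hx, Set.indicator_of_mem hx]
        push_cast
        ring
      · rw [Set.indicator_of_notMem hx, Set.indicator_of_notMem hx]
        push_cast
        ring
    rw [hsplit, integral_add hwg_int hWint, hWzero, add_zero]
  -- a.e. nonzero
  have hae : ∀ᵐ x : ℂ, x ≠ 0 := by
    have h0 : {a : ℂ | ¬ a ≠ 0} = {(0:ℂ)} := by ext y; simp
    rw [ae_iff, h0]
    exact measure_singleton 0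
  refine ⟨∫ x, g x, ?_, ?_⟩
  · -- principal value family
    have hdct : Tendsto (fun ε : ℝ => ∫ x : ℂ,
        ((Set.indicator {y : ℂ | ε < ‖y‖} (fun _ => (1:ℝ)) x : ℝ) : ℂ) * g x)
        (nhdsWithin 0 (Set.Ioi 0)) (nhds (∫ x, g x)) := by
      apply tendsto_integral_filter_of_dominated_convergence (fun x => ‖g x‖)
      · apply Eventually.of_forall
        intro ε
        exact ((Complex.measurable_ofReal.comp
          (measurable_const.indicator (isOpen_lt continuous_const continuous_norm).measurableSet)).mul
          hgmeas).aestronglyMeasurable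
      · apply Eventually.of_forall
        intro ε
        apply Eventually.of_forall
        intro x
        rw [norm_mul, Complex.norm_real]
        by_cases hx : x ∈ {y : ℂ | ε < ‖y‖}
        · rw [Set.indicator_of_mem hx]; simp
        · rw [Set.indicator_of_notMem hx]; simp [norm_nonneg]
      · exact hg_int.norm
      · filter_upwards [hae] with x hx
        have hxpos : 0 < ‖x‖ := norm_pos_iff.mpr hx
        apply Tendsto.congr' _ tendsto_const_nhds
        have hev : ∀ᶠ ε in nhdsWithin (0:ℝ) (Set.Ioi 0), ε < ‖x‖ := by
          apply eventually_nhdsWithin_of_eventually_nhds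
          exact eventually_lt_nhds hxpos
        filter_upwards [hev] with ε hε
        rw [Set.indicator_of_mem (by exact hε : x ∈ {y : ℂ | ε < ‖y‖})]
        simp
    apply Tendsto.congr' _ hdct
    filter_upwards [self_mem_nhdsWithin] with ε hε
    have hεpos : (0:ℝ) < ε := hε
    set w : ℂ → ℝ := Set.indicator {y : ℂ | ε < ‖y‖} (fun _ => (1:ℝ)) with hwdef
    have h1 : (∫ x in {x : ℂ | ε < ‖x‖}, φ x / x ^ α) = ∫ x : ℂ, (w x : ℂ) * (φ x / x ^ α) := by
      rw [← integral_indicator (isOpen_lt continuous_const continuous_norm).measurableSet]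
      congr 1
      funext x
      rw [hwdef]
      by_cases hx : x ∈ {y : ℂ | ε < ‖y‖}
      · rw [Set.indicator_of_mem hx, Set.indicator_of_mem hx]; simp
      · rw [Set.indicator_of_notMem hx, Set.indicator_of_notMem hx]; simp
    rw [h1]
    refine (key w
      (measurable_const.indicator (isOpen_lt continuous_const continuous_norm).measurableSet)
      ?_ ε hεpos ?_ 1 ?_).symm
    · intro c x hc
      rw [hwdef]
      have hnorm : ‖c * x‖ = ‖x‖ := by rw [norm_mul, hc, one_mul]
      have hiff : c * x ∈ {y : ℂ | ε < ‖y‖} ↔ x ∈ {y : ℂ | ε < ‖y‖} := by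
        simp only [Set.mem_setOf_eq, hnorm]
      by_cases hx : x ∈ {y : ℂ | ε < ‖y‖}
      · rw [Set.indicator_of_mem (hiff.mpr hx), Set.indicator_of_mem hx]
      · rw [Set.indicator_of_notMem (fun hmem => hx (hiff.mp hmem)),
          Set.indicator_of_notMem hx]
    · intro x hx
      rw [hwdef]
      apply Set.indicator_of_notMem
      simp only [Set.mem_setOf_eq, not_lt]
      exact le_of_lt hx
    · intro x
      rw [hwdef]
      by_cases hx : x ∈ {y : ℂ | ε < ‖y‖}
      · rw [Set.indicator_of_mem hx]; norm_num
      · rw [Set.indicator_of_notMem hx]; norm_num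
  · -- χ-regularization family
    have hdct : Tendsto (fun ε : ℝ => ∫ x : ℂ,
        ((χ (‖x‖ ^ (2 * αt) / ε) : ℝ) : ℂ) * g x)
        (nhdsWithin 0 (Set.Ioi 0)) (nhds (∫ x, g x)) := by
      apply tendsto_integral_filter_of_dominated_convergence (fun x => M * ‖g x‖)
      · apply Eventually.of_forall
        intro ε
        exact ((Complex.measurable_ofReal.comp
          (hχmeas.comp ((measurable_norm.pow_const _).div_const ε))).mul
          hgmeas).aestronglyMeasurable
      · filter_upwards [self_mem_nhdsWithin] with ε hε
        apply Eventually.of_forall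
        intro x
        rw [norm_mul, Complex.norm_real]
        have hεp : (0:ℝ) < ε := hε
        have harg : 0 ≤ ‖x‖ ^ (2 * αt) / ε := div_nonneg (by positivity) hεp.le
        exact mul_le_mul_of_nonneg_right (hχM _ harg) (norm_nonneg _)
      · exact hg_int.norm.const_mul M
      · filter_upwards [hae] with x hx
        have hxpos : 0 < ‖x‖ := norm_pos_iff.mpr hx
        have hcpos : 0 < ‖x‖ ^ (2 * αt) := pow_pos hxpos _
        apply Tendsto.congr' _ tendsto_const_nhds
        have hev : ∀ᶠ ε in nhdsWithin (0:ℝ) (Set.Ioi 0),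
            ε < ‖x‖ ^ (2 * αt) / max b 1 := by
          apply eventually_nhdsWithin_of_eventually_nhds
          apply eventually_lt_nhds
          positivity
        filter_upwards [hev, self_mem_nhdsWithin] with ε hε hε'
        have hεpos : (0:ℝ) < ε := hε'
        have hbarg : b ≤ ‖x‖ ^ (2 * αt) / ε := by
          have h2 : ε * max b 1 < ‖x‖ ^ (2 * αt) :=
            (lt_div_iff₀ (by positivity : (0:ℝ) < max b 1)).mp hε
          have h3 : max b 1 ≤ ‖x‖ ^ (2 * αt) / ε :=
            (le_div_iff₀ hεpos).mpr (by nlinarith)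
          exact le_trans (le_max_left _ _) h3
        rw [hχ1 _ hbarg]
        simp
    apply Tendsto.congr' _ hdct
    filter_upwards [self_mem_nhdsWithin] with ε hε
    have hεpos : (0:ℝ) < ε := hε
    set w : ℂ → ℝ := fun x => χ (‖x‖ ^ (2 * αt) / ε) with hwdef
    have hkey := key w
      (hχmeas.comp ((measurable_norm.pow_const _).div_const ε))
      (by
        intro c x hc
        rw [hwdef]
        dsimp only
        rw [norm_mul, hc, one_mul])
      (min 1 (a * ε)) (by positivity)
      (by
        intro x hx
        rw [hwdef]
        dsimp only
        have hx1 : ‖x‖ < 1 := lt_of_lt_of_le hx (min_le_left _ _)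
        have hx2 : ‖x‖ < a * ε := lt_of_lt_of_le hx (min_le_right _ _)
        have hpow : ‖x‖ ^ (2 * αt) ≤ ‖x‖ :=
          pow_le_of_le_one (norm_nonneg _) (le_of_lt hx1) (by omega)
        apply hχ0
        · positivity
        · rw [div_lt_iff₀ hεpos]
          calc ‖x‖ ^ (2 * αt) ≤ ‖x‖ := hpow
            _ < a * ε := hx2)
      M
      (by
        intro x
        rw [hwdef]
        dsimp only
        exact hχM _ (by positivity))
    simp only [mul_div_assoc]
    exact hkey.symm

end
end

section
/- Let α be a q × n integer matrix with rows α_i ∈ ℕ^n, and suppose there exists a nonzero vector v = (v_1,…,v_q) ∈ ℝ^q with Σ_i v_i α_i = 0. Let j = min{ i : v_i ≠ 0 }. Then there exist constants C, c > 0 such that: whenever ε_1,…,ε_q > 0 satisfy ε_j < C(ε_{j+1}⋯ε_q)^c, one has |x^{α_j}|² ξ_j(x) / ε_j ≥ 1 for all x in the closed unit polydisc Δ ⊂ ℂ^n satisfying |x^{α_i}|² ≥ C_i ε_i for i = j+1,…,q, where ξ_j is any fixed continuous function bounded below by a positive constant on Δ and C_i > 0 are fixed constants. Consequently, for χ smooth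 with χ ≡ 1 on [1,∞), one has χ(|x^{α_j}|²ξ_j/ε_j) ≡ 1 and d(χ(|x^{α_j}|²ξ_j/ε_j)) ≡ 0 on that set. -/
open Finset

theorem aux_deriv_zero {χ : ℝ → ℝ} (hχ : ContDiff ℝ (⊤ : ℕ∞) χ)
    (h1 : ∀ t, 1 ≤ t → χ t = 1) {t : ℝ} (ht : 1 ≤ t) : deriv χ t = 0 := by
  have hd : HasDerivWithinAt χ (deriv χ t) (Set.Ici t) t :=
    ((hχ.differentiable (by simp) t).hasDerivAt).hasDerivWithinAt
  have heq : Set.EqOn χ (fun _ => (1:ℝ)) (Set.Ici t) := fun s hs => h1 s (le_trans ht hs)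
  have hc : HasDerivWithinAt χ 0 (Set.Ici t) t :=
    (hasDerivWithinAt_const t (Set.Ici t) (1:ℝ)).congr heq (heq Set.self_mem_Ici)
  have h2 := hc.derivWithin (uniqueDiffOn_Ici t t Set.self_mem_Ici)
  have h3 := hd.derivWithin (uniqueDiffOn_Ici t t Set.self_mem_Ici)
  rw [h3] at h2; exact h2


/-- Lemma 3.1 / ranklemma: a linear relation Σ v_i α_i = 0 among the
rows of the exponent matrix forces the cutoff attached to the first row j with
v_j ≠ 0 to be ≡ 1 (and its derivative ≡ 0) on the region of the closed unit
polydisc where |x^{α_i}|² ≥ C_i ε_i for i > j, provided ε_j < C (ε_{j+1}⋯ε_q)^c. -/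
theorem stmt6 (q n : ℕ) (α : Fin q → Fin n → ℕ) (v : Fin q → ℝ) (hv : v ≠ 0)
    (hrel : ∀ k : Fin n, (∑ i, v i * (α i k : ℝ)) = 0)
    (j : Fin q) (hj : v j ≠ 0) (hjmin : ∀ i, i < j → v i = 0)
    (Ci : Fin q → ℝ) (hCi : ∀ i, 0 < Ci i)
    (ξ : (Fin n → ℂ) → ℝ) (hξ : Continuous ξ)
    (m : ℝ) (hm : 0 < m) (hξm : ∀ x : Fin n → ℂ, (∀ k, ‖x k‖ ≤ 1) → m ≤ ξ x) :
    ∃ C c : ℝ, 0 < C ∧ 0 < c ∧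
      ∀ ε : Fin q → ℝ, (∀ i, 0 < ε i) →
        ε j < C * (∏ i ∈ univ.filter (fun i => j < i), ε i) ^ c →
        ∀ x : Fin n → ℂ, (∀ k, ‖x k‖ ≤ 1) →
          (∀ i, j < i → Ci i * ε i ≤ ‖∏ k, x k ^ α i k‖ ^ 2) →
          (1 ≤ ‖∏ k, x k ^ α j k‖ ^ 2 * ξ x / ε j ∧
            ∀ χ : ℝ → ℝ, ContDiff ℝ (⊤ : ℕ∞) χ → (∀ t, 1 ≤ t → χ t = 1) →
              (χ (‖∏ k, x k ^ α j k‖ ^ 2 * ξ x / ε j) = 1 ∧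
                deriv χ (‖∏ k, x k ^ α j k‖ ^ 2 * ξ x / ε j) = 0)) := by
  classical
  set F : Finset (Fin q) := univ.filter (fun i => j < i) with hF
  have hvj : 0 < |v j| := abs_pos.mpr hj
  obtain ⟨M, hMdef⟩ : ∃ M : ℝ, M = 1 + (∑ i, |v i|) / |v j| := ⟨_, rfl⟩
  have hM1 : 1 ≤ M := by
    have h0 : 0 ≤ (∑ i, |v i|) / |v j| :=
      div_nonneg (Finset.sum_nonneg fun i _ => abs_nonneg _) hvj.le
    rw [hMdef]; linarith
  have hM0 : 0 < M := lt_of_lt_of_le one_pos hM1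
  have hMv : ∀ i, |v i| ≤ M * |v j| := by
    intro i
    have h1 : |v i| ≤ ∑ i', |v i'| :=
      Finset.single_le_sum (f := fun i => |v i|) (fun i _ => abs_nonneg _) (mem_univ i)
    have h2 : (∑ i', |v i'|) = ((∑ i', |v i'|) / |v j|) * |v j| := by
      field_simp
    rw [hMdef]; nlinarith [hvj]
  refine ⟨m * ∏ i ∈ F, (Ci i) ^ M, M, mul_pos hm (Finset.prod_pos fun i _ =>
    Real.rpow_pos_of_pos (hCi i) M), hM0, ?_⟩
  intro ε hε hεj x hx hreg
  set a : Fin n → ℝ := fun k => ‖x k‖ with ha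
  have ha0 : ∀ k, 0 ≤ a k := fun k => norm_nonneg _
  have ha1 : ∀ k, a k ≤ 1 := hx
  set P : Fin q → ℝ := fun i => ∏ k, a k ^ α i k with hPdef
  have hnorm : ∀ i, ‖∏ k, x k ^ α i k‖ = P i := by
    intro i
    simp [hPdef, ha, norm_prod, norm_pow]
  have hPnn : ∀ i, 0 ≤ P i := fun i => Finset.prod_nonneg fun k _ => pow_nonneg (ha0 k) _
  have hPpos : ∀ i, j < i → 0 < P i := by
    intro i hi
    have h1 := hreg i hi
    rw [hnorm i] at h1
    nlinarith [mul_pos (hCi i) (hε i), hPnn i]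
  have hPj : 0 < P j := by
    rcases lt_or_eq_of_le (hPnn j) with h | h
    · exact h
    exfalso
    obtain ⟨k, -, hk⟩ := Finset.prod_eq_zero_iff.mp h.symm
    have hak : a k = 0 ∧ α j k ≠ 0 := pow_eq_zero_iff'.mp hk
    have halt : ∀ i, j < i → (α i k : ℝ) = 0 := by
      intro i hi
      by_contra hne
      have hαik : α i k ≠ 0 := by exact_mod_cast hne
      have : P i = 0 := Finset.prod_eq_zero (mem_univ k)
        (by rw [hak.1]; exact zero_pow hαik)
      exact absurd this (ne_of_gt (hPpos i hi))
    have hsum := hrel k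
    have : (∑ i, v i * (α i k : ℝ)) = v j * (α j k : ℝ) := by
      refine Finset.sum_eq_single j ?_ (by simp)
      intro i _ hne
      rcases lt_or_gt_of_ne hne with h' | h'
      · rw [hjmin i h', zero_mul]
      · rw [halt i h', mul_zero]
    rw [this] at hsum
    have : (α j k : ℝ) ≠ 0 := Nat.cast_ne_zero.mpr hak.2
    exact this ((mul_eq_zero.mp hsum).resolve_left hj)
  set L : Fin q → ℝ := fun i => ∑ k, (α i k : ℝ) * Real.log (a k) with hLdef
  have hlog : ∀ i, 0 < P i → Real.log (P i) = L i := by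
    intro i hPi
    rw [hPdef]
    rw [Real.log_prod]
    · exact Finset.sum_congr rfl fun k _ => Real.log_pow _ _
    · intro k _ h0
      exact absurd (Finset.prod_eq_zero (mem_univ k) h0) (ne_of_gt hPi)
  have hLnonpos : ∀ i, L i ≤ 0 := by
    intro i
    refine Finset.sum_nonpos fun k _ => ?_
    exact mul_nonpos_of_nonneg_of_nonpos (Nat.cast_nonneg _)
      (Real.log_nonpos (ha0 k) (ha1 k))
  have hsum0 : ∑ i, v i * L i = 0 := by
    have e : ∑ i, v i * L i = ∑ k, (∑ i, v i * (α i k : ℝ)) * Real.log (a k) := by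
      simp_rw [hLdef, Finset.mul_sum, Finset.sum_mul]
      rw [Finset.sum_comm]
      exact Finset.sum_congr rfl fun k _ => Finset.sum_congr rfl fun i _ => by ring
    rw [e]
    simp [hrel]
  have hvL : v j * L j = -∑ i ∈ F, v i * L i := by
    have e1 : ∑ i, v i * L i = v j * L j + ∑ i ∈ univ.erase j, v i * L i :=
      (Finset.add_sum_erase _ _ (mem_univ j)).symm
    have e2 : ∑ i ∈ univ.erase j, v i * L i = ∑ i ∈ F, v i * L i := by
      refine (Finset.sum_subset ?_ ?_).symm
      · intro i hi
        rw [hF, Finset.mem_filter] at hi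
        exact Finset.mem_erase.mpr ⟨ne_of_gt hi.2, mem_univ i⟩
      · intro i hi hni
        have hij : i ≠ j := (Finset.mem_erase.mp hi).1
        have : ¬ j < i := by
          intro h'
          exact hni (by rw [hF]; exact Finset.mem_filter.mpr ⟨mem_univ i, h'⟩)
        have : i < j := lt_of_le_of_ne (not_lt.mp this) hij
        rw [hjmin i this, zero_mul]
    rw [e1, e2] at hsum0
    linarith
  set T : ℝ := ∑ i ∈ F, L i with hT
  have key : M * T ≤ L j := by
    have h1 : |v j * L j| ≤ ∑ i ∈ F, |v i| * (-L i) := by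
      rw [hvL, abs_neg]
      refine (Finset.abs_sum_le_sum_abs _ _).trans (Finset.sum_le_sum fun i _ => ?_)
      rw [abs_mul, abs_of_nonpos (hLnonpos i)]
    have h2 : ∑ i ∈ F, |v i| * (-L i) ≤ ∑ i ∈ F, (M * |v j|) * (-L i) :=
      Finset.sum_le_sum fun i _ =>
        mul_le_mul_of_nonneg_right (hMv i) (neg_nonneg.mpr (hLnonpos i))
    have h3 : |v j * L j| = |v j| * (-L j) := by
      rw [abs_mul, abs_of_nonpos (hLnonpos j)]
    have h4 : ∑ i ∈ F, (M * |v j|) * (-L i) = (M * |v j|) * (-T) := by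
      rw [hT, ← Finset.mul_sum, ← Finset.sum_neg_distrib]
    rw [h3] at h1
    rw [h4] at h2
    have h5 : |v j| * (-L j) ≤ (M * |v j|) * (-T) := h1.trans h2
    nlinarith [hvj]
  have hexp : ∀ i, 0 < P i → P i = Real.exp (L i) := by
    intro i hPi
    rw [← hlog i hPi, Real.exp_log hPi]
  have hprod : ∏ i ∈ F, ((P i) ^ 2) ^ M ≤ (P j) ^ 2 := by
    have e1 : ∀ i ∈ F, ((P i) ^ 2) ^ M = Real.exp (M * (2 * L i)) := by
      intro i hi
      have hPi := hPpos i (Finset.mem_filter.mp hi).2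
      rw [Real.rpow_def_of_pos (by positivity), Real.log_pow, hlog i hPi]
      ring_nf
    rw [Finset.prod_congr rfl e1, ← Real.exp_sum]
    have e2 : ∑ i ∈ F, M * (2 * L i) = 2 * (M * T) := by
      simp only [hT, Finset.mul_sum]
      exact Finset.sum_congr rfl fun i _ => by ring
    rw [e2]
    have e3 : (P j) ^ 2 = Real.exp (2 * L j) := by
      rw [hexp j hPj, ← Real.exp_nat_mul]
      norm_num
    rw [e3]
    exact Real.exp_le_exp.mpr (by linarith)
  have hfin : (m * ∏ i ∈ F, (Ci i) ^ M) * (∏ i ∈ F, ε i) ^ M ≤ P j ^ 2 * ξ x := by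
    have step0 : (∏ i ∈ F, (Ci i) ^ M) * (∏ i ∈ F, ε i) ^ M
        = ∏ i ∈ F, (Ci i * ε i) ^ M := by
      rw [← Real.finset_prod_rpow F ε (fun i _ => (hε i).le) M, ← Finset.prod_mul_distrib]
      exact Finset.prod_congr rfl fun i _ =>
        (Real.mul_rpow (hCi i).le (hε i).le).symm
    have step1 : ∏ i ∈ F, (Ci i * ε i) ^ M ≤ ∏ i ∈ F, ((P i) ^ 2) ^ M := by
      refine Finset.prod_le_prod (fun i _ => Real.rpow_nonneg (mul_nonneg (hCi i).le (hε i).le) M) fun i hi => ?_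
      have hreg' := hreg i (Finset.mem_filter.mp hi).2
      rw [hnorm i] at hreg'
      exact Real.rpow_le_rpow (mul_nonneg (hCi i).le (hε i).le) hreg' hM0.le
    have hXnn : 0 ≤ ∏ i ∈ F, ((P i) ^ 2) ^ M :=
      Finset.prod_nonneg fun i _ => Real.rpow_nonneg (by positivity) _
    have hξx : m ≤ ξ x := hξm x hx
    calc (m * ∏ i ∈ F, (Ci i) ^ M) * (∏ i ∈ F, ε i) ^ M
        = m * (∏ i ∈ F, (Ci i * ε i) ^ M) := by rw [mul_assoc, step0]
      _ ≤ m * (∏ i ∈ F, ((P i) ^ 2) ^ M) := by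
          exact mul_le_mul_of_nonneg_left step1 hm.le
      _ ≤ ξ x * (∏ i ∈ F, ((P i) ^ 2) ^ M) := mul_le_mul_of_nonneg_right hξx hXnn
      _ ≤ ξ x * (P j) ^ 2 := mul_le_mul_of_nonneg_left hprod (hm.le.trans hξx)
      _ = (P j) ^ 2 * ξ x := mul_comm _ _
  have h1le : 1 ≤ ‖∏ k, x k ^ α j k‖ ^ 2 * ξ x / ε j := by
    rw [hnorm j, le_div_iff₀ (hε j), one_mul]
    exact hεj.le.trans hfin
  exact ⟨h1le, fun χ hχ hχ1 => ⟨hχ1 _ h1le, aux_deriv_zero hχ hχ1 h1le⟩⟩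
end

section
/- Let α_1, …, α_m ∈ ℕ^n be multiindices such that α_1, …, α_μ are linearly independent and each α_j for μ < j ≤ m lies in span(α_1,…,α_μ). Let h_{μ+1},…,h_m be holomorphic functions near 0 in ℂ^n. Then, as (0 or 1,·)-forms, ⋀_{j=1}^{μ} d(x^{α_j}) ∧ ⋀_{j=μ+1}^{m} d(x^{α_j} h_j) = x^{α_{μ+1} + ⋯ + α_m} ⋀_{j=1}^{μ} d(x^{α_j}) ∧ ⋀_{j=μ+1}^{m} dh_j. In particular d(x^{α_1}) ∧ ⋯ ∧ d(x^{α_μ}) ∧ d(x^{α_j}) = 0 for each μ < j ≤ m. -/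
/-!
Where no coordinate vanishes, `d(x^β) = x^β ∑ᵢ βᵢ dxᵢ/xᵢ`, and `β ↦ ∑ᵢ βᵢ dxᵢ/xᵢ` is linear.
So if `β₁, …, β_k` are linearly dependent over `ℝ`, then `d(x^{β₁}) ∧ ⋯ ∧ d(x^{β_k})` vanishes on
that dense set, hence everywhere by continuity. When every `α_j` with `j > μ` lies in the span of
`α₁, …, α_μ`, the form `P = d(x^{α₁}) ∧ ⋯ ∧ d(x^{α_μ})` therefore kills each `d(x^{α_j})`, and in
`P ∧ ⋀_{j>μ} (h_j d(x^{α_j}) + x^{α_j} dh_j)` only the terms `x^{α_j} dh_j` survive.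
-/

open ExteriorAlgebra

namespace ExteriorAlgebra

variable {R M : Type*} [CommRing R] [AddCommGroup M] [Module R M]

theorem mul_ι_mul_ι_eq_zero {P : ExteriorAlgebra R M} {u : M} (h : P * ι R u = 0) (v : M) :
    P * ι R v * ι R u = 0 := by
  rw [mul_assoc, eq_neg_of_add_eq_zero_left (ι_add_mul_swap v u), mul_neg, ← mul_assoc, h,
    zero_mul, neg_zero]

theorem mul_prod_ofFn_ι_smul_add_smul {k : ℕ} (P : ExteriorAlgebra R M) (w u : Fin k → M)
    (a b : Fin k → R) (h : ∀ j, P * ι R (u j) = 0) :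
    P * (List.ofFn fun j => ι R (a j • w j + b j • u j)).prod
      = (∏ j, a j) • (P * (List.ofFn fun j => ι R (w j)).prod) := by
  induction k generalizing P with
  | zero => simp
  | succ k ih =>
    have head : P * ι R (a 0 • w 0 + b 0 • u 0) = a 0 • (P * ι R (w 0)) := by
      rw [map_add, map_smul, map_smul, mul_add, mul_smul_comm, mul_smul_comm, h 0, smul_zero,
        add_zero]
    rw [List.ofFn_succ, List.prod_cons, ← mul_assoc, head, smul_mul_assoc,
      ih _ _ (fun j => u j.succ) _ _ fun j => mul_ι_mul_ι_eq_zero (h j.succ) (w 0),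
      List.ofFn_succ (f := fun j => ι R (w j)), List.prod_cons, Fin.prod_univ_succ, ← mul_assoc,
      smul_smul]

theorem prod_ofFn_ι_mul_ι {k : ℕ} (v : Fin k → M) (u : M) :
    (List.ofFn fun j => ι R (v j)).prod * ι R u = ιMulti R (k + 1) (Fin.snoc v u) := by
  rw [ιMulti_apply, List.ofFn_succ', List.concat_eq_append, List.prod_append]
  simp

end ExteriorAlgebra

theorem MultilinearMap.continuous_of_finiteDimensional {𝕜 ι E F : Type*}
    [NontriviallyNormedField 𝕜] [CompleteSpace 𝕜] [Fintype ι]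
    [NormedAddCommGroup E] [NormedSpace 𝕜 E] [FiniteDimensional 𝕜 E]
    [AddCommGroup F] [Module 𝕜 F] [TopologicalSpace F] [ContinuousAdd F] [ContinuousSMul 𝕜 F]
    (M : MultilinearMap 𝕜 (fun _ : ι => E) F) : Continuous M := by
  classical
  let b := Module.finBasis 𝕜 E
  have expand : ⇑M = fun v => ∑ f : ι → Fin (Module.finrank 𝕜 E),
      (∏ j, b.equivFun (v j) (f j)) • M fun j => b (f j) := by
    funext v
    conv_lhs => rw [← funext fun j => b.sum_equivFun (v j)]
    rw [M.map_sum]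
    exact Finset.sum_congr rfl fun f _ => M.map_smul_univ _ _
  have hcoord : Continuous b.equivFun := b.equivFun.toLinearMap.continuous_of_finiteDimensional
  rw [expand]
  fun_prop

theorem linearIndependent_of_linearIndependent_ofReal {ι : Type*} {n : ℕ} {v : ι → Fin n → ℝ}
    (h : LinearIndependent ℂ fun j i => (v j i : ℂ)) : LinearIndependent ℝ v :=
  (h.restrict_scalars' ℝ).of_comp (Complex.ofRealCLM.toLinearMap.compLeft (Fin n))

section Monomial

variable {n : ℕ}

/-- Applied to `c = β`, this is `d(y^β) / y^β = ∑ᵢ βᵢ dyᵢ / yᵢ`. -/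
noncomputable def logDerivMonomial (y : Fin n → ℂ) :
    (Fin n → ℂ) →ₗ[ℂ] (Fin n → ℂ) →ₗ[ℂ] ℂ :=
  Fintype.linearCombination ℂ fun i => (y i)⁻¹ • LinearMap.proj i

theorem fderiv_prod_pow_of_forall_ne_zero (β : Fin n → ℕ) {y : Fin n → ℂ} (hy : ∀ i, y i ≠ 0) :
    (fderiv ℂ (fun z => ∏ i, z i ^ β i) y : (Fin n → ℂ) →ₗ[ℂ] ℂ)
      = (∏ i, y i ^ β i) • logDerivMonomial y fun i => (β i : ℂ) := by
  classical
  have hderiv := HasFDerivAt.finsetProd (u := Finset.univ) (x := y) (g := fun i z => z i ^ β i)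
    fun i _ => (hasDerivAt_pow (β i) (y i)).comp_hasFDerivAt y (hasFDerivAt_apply (𝕜 := ℂ) i y)
  rw [hderiv.fderiv]
  refine LinearMap.ext fun z => ?_
  simp only [ContinuousLinearMap.toLinearMap_sum, ContinuousLinearMap.toLinearMap_smul,
    ContinuousLinearMap.coe_proj, LinearMap.coe_sum, LinearMap.coe_smul, LinearMap.coe_proj,
    Finset.sum_apply, Pi.smul_apply, Function.eval, smul_eq_mul, logDerivMonomial,
    Fintype.linearCombination_apply, Finset.mul_sum]
  refine Finset.sum_congr rfl fun i _ => ?_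
  have hpow : (β i : ℂ) * y i ^ (β i - 1) = β i * (y i ^ β i * (y i)⁻¹) := by
    rcases Nat.eq_zero_or_pos (β i) with hβ | hβ
    · simp [hβ]
    · rw [pow_sub₀ _ (hy i) hβ, pow_one]
  rw [← Finset.mul_prod_erase Finset.univ _ (Finset.mem_univ i), hpow]
  ring

theorem ιMulti_fderiv_prod_pow_eq_zero_of_forall_ne_zero {k : ℕ} (v : Fin k → Fin n → ℕ)
    (hv : ¬ LinearIndependent ℝ fun j i => (v j i : ℝ)) {y : Fin n → ℂ} (hy : ∀ i, y i ≠ 0) :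
    ιMulti ℂ k (fun j => (fderiv ℂ (fun z => ∏ i, z i ^ v j i) y : (Fin n → ℂ) →ₗ[ℂ] ℂ)) = 0 := by
  have hdep : ¬ LinearIndependent ℂ fun j => logDerivMonomial y fun i => (v j i : ℂ) :=
    fun h => hv (linearIndependent_of_linearIndependent_ofReal (by simpa using h.of_comp _))
  simp only [fderiv_prod_pow_of_forall_ne_zero _ hy]
  rw [(ιMulti ℂ k).map_smul_univ, (ιMulti ℂ k).map_linearDependent _ hdep, smul_zero]

theorem ιMulti_fderiv_prod_pow_eq_zero {k : ℕ} (v : Fin k → Fin n → ℕ)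
    (hv : ¬ LinearIndependent ℝ fun j i => (v j i : ℝ)) (x : Fin n → ℂ) :
    ιMulti ℂ k (fun j => (fderiv ℂ (fun z => ∏ i, z i ^ v j i) x : (Fin n → ℂ) →ₗ[ℂ] ℂ)) = 0 := by
  rw [← Module.forall_dual_apply_eq_zero_iff ℂ]
  intro φ
  let M : MultilinearMap ℂ (fun _ : Fin k => (Fin n → ℂ) →L[ℂ] ℂ) ℂ :=
    (φ.compMultilinearMap (ιMulti ℂ k).toMultilinearMap).compLinearMap
      fun _ => ContinuousLinearMap.coeLM ℂ
  have hcont : Continuous fun y => M fun j => fderiv ℂ (fun z => ∏ i, z i ^ v j i) y :=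
    M.continuous_of_finiteDimensional.comp <| continuous_pi fun j =>
      (contDiff_prod fun i _ => (contDiff_apply ℂ ℂ i).pow (v j i)).continuous_fderiv one_ne_zero
  have hzero : Set.EqOn (fun y => M fun j => fderiv ℂ (fun z => ∏ i, z i ^ v j i) y) 0
      (Set.univ.pi fun _ => {0}ᶜ) := fun y hy => by
    simpa [M] using congrArg φ (ιMulti_fderiv_prod_pow_eq_zero_of_forall_ne_zero v hv
      (by simpa using hy))
  exact congrFun (hcont.ext_on (dense_pi _ fun _ _ => dense_compl_singleton 0) continuous_const
    hzero) x

theorem prod_ofFn_ι_fderiv_mul_ι_fderiv_eq_zero {k : ℕ} (β : Fin k → Fin n → ℕ)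
    (γ : Fin n → ℕ) (hγ : (fun i => (γ i : ℝ)) ∈ Submodule.span ℝ
      (Set.range fun j i => (β j i : ℝ))) (x : Fin n → ℂ) :
    (List.ofFn fun j =>
        ι ℂ (fderiv ℂ (fun z => ∏ i, z i ^ β j i) x : (Fin n → ℂ) →ₗ[ℂ] ℂ)).prod *
      ι ℂ (fderiv ℂ (fun z => ∏ i, z i ^ γ i) x : (Fin n → ℂ) →ₗ[ℂ] ℂ) = 0 := by
  rw [prod_ofFn_ι_mul_ι]
  convert ιMulti_fderiv_prod_pow_eq_zero (Fin.snoc β γ) ?_ x using 2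
  · exact (Fin.comp_snoc (fun b : Fin n → ℕ =>
      ((fderiv ℂ (fun z => ∏ i, z i ^ b i) x : (Fin n → ℂ) →L[ℂ] ℂ) : (Fin n → ℂ) →ₗ[ℂ] ℂ))
      β γ).symm
  · rw [show (fun j i => (Fin.snoc (α := fun _ => Fin n → ℕ) β γ j i : ℝ))
        = Fin.snoc (fun j i => (β j i : ℝ)) (fun i => (γ i : ℝ)) from
      Fin.comp_snoc (fun (b : Fin n → ℕ) i => (b i : ℝ)) β γ, linearIndependent_finSnoc]
    exact fun h => h.2 hγ

theorem prod_ofFn_ι_fderiv_mul_prod_ofFn_ι_fderiv_prod_pow_mul {k r : ℕ}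
    (β : Fin k → Fin n → ℕ) (γ : Fin r → Fin n → ℕ)
    (hγ : ∀ j, (fun i => (γ j i : ℝ)) ∈ Submodule.span ℝ (Set.range fun j i => (β j i : ℝ)))
    (h : Fin r → (Fin n → ℂ) → ℂ) {x : Fin n → ℂ} (hh : ∀ j, DifferentiableAt ℂ (h j) x) :
    (List.ofFn fun j =>
        ι ℂ (fderiv ℂ (fun z => ∏ i, z i ^ β j i) x : (Fin n → ℂ) →ₗ[ℂ] ℂ)).prod *
      (List.ofFn fun j =>
        ι ℂ (fderiv ℂ (fun z => (∏ i, z i ^ γ j i) * h j z) x : (Fin n → ℂ) →ₗ[ℂ] ℂ)).prod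
    = (∏ j, ∏ i, x i ^ γ j i) •
      ((List.ofFn fun j =>
          ι ℂ (fderiv ℂ (fun z => ∏ i, z i ^ β j i) x : (Fin n → ℂ) →ₗ[ℂ] ℂ)).prod *
        (List.ofFn fun j => ι ℂ (fderiv ℂ (h j) x : (Fin n → ℂ) →ₗ[ℂ] ℂ)).prod) := by
  have hmon (e : Fin n → ℕ) : DifferentiableAt ℂ (fun z => ∏ i, z i ^ e i) x := by fun_prop
  simp only [fderiv_fun_mul (hmon _) (hh _), ContinuousLinearMap.toLinearMap_add,
    ContinuousLinearMap.toLinearMap_smul]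
  exact mul_prod_ofFn_ι_smul_add_smul _ _ _ _ _ fun j =>
    prod_ofFn_ι_fderiv_mul_ι_fderiv_eq_zero β (γ j) (hγ j) x

end Monomial

theorem stmt8_general (n m μ : ℕ) (hμ : μ ≤ m) (α : Fin m → Fin n → ℕ)
    (hspan : ∀ j : Fin m, μ ≤ (j : ℕ) →
      (fun i => (α j i : ℝ)) ∈ Submodule.span ℝ
        (Set.range fun j' : Fin μ => fun i => (α (Fin.castLE hμ j') i : ℝ)))
    (U : Set (Fin n → ℂ)) (hU : IsOpen U)
    (h : Fin m → (Fin n → ℂ) → ℂ) (hh : ∀ j, DifferentiableOn ℂ (h j) U) :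
    ∀ x ∈ U,
      letI d : ((Fin n → ℂ) → ℂ) →
          ExteriorAlgebra ℂ ((Fin n → ℂ) →ₗ[ℂ] ℂ) :=
        fun F => ι ℂ (fderiv ℂ F x : (Fin n → ℂ) →ₗ[ℂ] ℂ)
      ((List.ofFn fun j : Fin m =>
          d fun y => (∏ i, y i ^ α j i) * (if μ ≤ (j : ℕ) then h j y else 1)).prod =
        (∏ i, x i ^ (∑ j ∈ Finset.univ.filter (fun j : Fin m => μ ≤ (j : ℕ)), α j i)) •
          (List.ofFn fun j : Fin m =>
            d fun y => if μ ≤ (j : ℕ) then h j y else ∏ i, y i ^ α j i).prod) ∧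
      ∀ j : Fin m, μ ≤ (j : ℕ) →
        (List.ofFn fun j' : Fin μ =>
            d fun y => ∏ i, y i ^ α (Fin.castLE hμ j') i).prod *
          (d fun y => ∏ i, y i ^ α j i) = 0 := by
  intro x hx
  dsimp only
  refine ⟨?_, fun j hj => prod_ofFn_ι_fderiv_mul_ι_fderiv_eq_zero _ (α j) (hspan j hj) x⟩
  obtain ⟨r, rfl⟩ := Nat.exists_eq_add_of_le hμ
  have hlt (j : Fin μ) : ¬ μ ≤ (j : ℕ) := not_le.2 j.isLt
  have hexp : ∏ i, x i ^ (∑ j ∈ Finset.univ.filter (fun j : Fin (μ + r) => μ ≤ (j : ℕ)), α j i)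
      = ∏ j : Fin r, ∏ i, x i ^ α (Fin.natAdd μ j) i := by
    simp only [Finset.sum_filter, Fin.sum_univ_add, Fin.val_castAdd, hlt, if_false,
      Finset.sum_const_zero, zero_add, Fin.val_natAdd, Nat.le_add_right, if_true,
      ← Finset.prod_pow_eq_pow_sum]
    exact Finset.prod_comm
  simp only [List.ofFn_add, List.prod_append, Fin.val_castLE, Fin.val_natAdd, hlt,
    Nat.le_add_right, if_true, if_false, mul_one, hexp]
  exact prod_ofFn_ι_fderiv_mul_prod_ofFn_ι_fderiv_prod_pow_mul _ _ (fun j => hspan _ (by simp)) _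
    fun j => (hh _).differentiableAt (hU.mem_nhds hx)

/-- with α_1,…,α_μ linearly independent and α_j ∈ span(α_1,…,α_μ)
for μ < j ≤ m, and h_j holomorphic near 0, the holomorphic 1-forms (as elements
of the exterior algebra of the dual space, d f being the ℂ-Fréchet derivative)
satisfy ⋀_{j≤μ} d(x^{α_j}) ∧ ⋀_{j>μ} d(x^{α_j} h_j)
      = x^{α_{μ+1}+⋯+α_m} ⋀_{j≤μ} d(x^{α_j}) ∧ ⋀_{j>μ} dh_j,
and in particular d(x^{α_1}) ∧ ⋯ ∧ d(x^{α_μ}) ∧ d(x^{α_j}) = 0 for j > μ. -/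
theorem stmt8 (n m μ : ℕ) (hμ : μ ≤ m) (α : Fin m → Fin n → ℕ)
    (hind : LinearIndependent ℝ fun j : Fin μ => fun i => (α (Fin.castLE hμ j) i : ℝ))
    (hspan : ∀ j : Fin m, μ ≤ (j : ℕ) →
      (fun i => (α j i : ℝ)) ∈ Submodule.span ℝ
        (Set.range fun j' : Fin μ => fun i => (α (Fin.castLE hμ j') i : ℝ)))
    (U : Set (Fin n → ℂ)) (hU : IsOpen U) (h0 : (0 : Fin n → ℂ) ∈ U)
    (h : Fin m → (Fin n → ℂ) → ℂ) (hh : ∀ j, DifferentiableOn ℂ (h j) U) :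
    ∀ x ∈ U,
      letI d : ((Fin n → ℂ) → ℂ) →
          ExteriorAlgebra ℂ ((Fin n → ℂ) →ₗ[ℂ] ℂ) :=
        fun F => ι ℂ (fderiv ℂ F x : (Fin n → ℂ) →ₗ[ℂ] ℂ)
      ((List.ofFn fun j : Fin m =>
          d fun y => (∏ i, y i ^ α j i) * (if μ ≤ (j : ℕ) then h j y else 1)).prod =
        (∏ i, x i ^ (∑ j ∈ Finset.univ.filter (fun j : Fin m => μ ≤ (j : ℕ)), α j i)) •
          (List.ofFn fun j : Fin m =>
            d fun y => if μ ≤ (j : ℕ) then h j y else ∏ i, y i ^ α j i).prod) ∧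
      ∀ j : Fin m, μ ≤ (j : ℕ) →
        (List.ofFn fun j' : Fin μ =>
            d fun y => ∏ i, y i ^ α (Fin.castLE hμ j') i).prod *
          (d fun y => ∏ i, y i ^ α j i) = 0 :=
  stmt8_general n m μ hμ α hspan U hU h hh
end
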